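/- arXiv:2208.00578 — 12 statements merged into one kernel-verified Lean document; each statement's English description precedes it below -/
import Mathlib

section
/- Let d ≥ 2 and n ≥ 1, and let (G_i)_{i=1}^n be a GSIC POVM with n elements on ℂ^d with constants a and b. Then a ≥ d/n², and if a = d/n² then every G_i equals (1/n)·I. -/
open scoped ComplexOrder
open Matrix

/-!
With `H i = G i - (1/n) • 1`, the completeness relation `∑ G i = 1` gives
`∑ tr (H i ^ 2) = ∑ tr (G i ^ 2) - d / n = n (a - d / n²)`. Each `H i` is Hermitian, so
`tr (H i ^ 2) ≥ 0` with equality only for `H i = 0`.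
-/

namespace Matrix

section sumOfSquares

variable {ι m R : Type*} [Fintype ι] [Fintype m] [DecidableEq m] [CommRing R]

theorem sum_trace_mul_self_sub_smul_one {G : ι → Matrix m m R} (hsum : ∑ i, G i = 1) (c : R) :
    ∑ i, ((G i - c • 1) * (G i - c • 1)).trace =
      ∑ i, (G i * G i).trace - 2 * c * Fintype.card m + Fintype.card ι * c ^ 2 * Fintype.card m := by
  have hsq : ∀ i, (G i - c • 1) * (G i - c • 1) = G i * G i - (2 * c) • G i + c ^ 2 • 1 := by
    intro i
    simp only [sub_mul, mul_sub, smul_mul_assoc, mul_smul_comm, mul_one, one_mul]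
    module
  simp only [hsq, trace_add, trace_sub, trace_smul, trace_one, smul_eq_mul, Finset.sum_add_distrib,
    Finset.sum_sub_distrib, ← Finset.mul_sum, ← trace_sum, hsum, Finset.sum_const,
    Finset.card_univ, nsmul_eq_mul]
  ring

end sumOfSquares

section trace

variable {m R : Type*} [Fintype m] [CommRing R] [PartialOrder R] [StarRing R]
  [StarOrderedRing R]

theorem IsHermitian.trace_mul_self_nonneg {A : Matrix m m R} (hA : A.IsHermitian) :
    0 ≤ (A * A).trace := by
  simpa only [hA.eq] using (posSemidef_conjTranspose_mul_self A).trace_nonneg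

theorem IsHermitian.trace_mul_self_eq_zero_iff [NoZeroDivisors R] {A : Matrix m m R}
    (hA : A.IsHermitian) : (A * A).trace = 0 ↔ A = 0 := by
  simpa only [hA.eq] using trace_conjTranspose_mul_self_eq_zero_iff (A := A)

end trace

end Matrix

theorem gsic_purity_lower_bound_general (d n : ℕ) (hn : 1 ≤ n)
    (G : Fin n → Matrix (Fin d) (Fin d) ℂ)
    (hpsd : ∀ i, (G i).PosSemidef)
    (hsum : ∑ i, G i = 1)
    (a : ℝ)
    (ha : ∀ i, (G i * G i).trace = (a : ℂ)) :
    (d : ℝ) / n ^ 2 ≤ a ∧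
      (a = (d : ℝ) / n ^ 2 → ∀ i, G i = (1 / (n : ℂ)) • (1 : Matrix (Fin d) (Fin d) ℂ)) := by
  set H := fun i => G i - (1 / (n : ℂ)) • (1 : Matrix (Fin d) (Fin d) ℂ)
  have hH : ∀ i, (H i).IsHermitian := fun i =>
    (hpsd i).isHermitian.sub (isHermitian_one.smul (by simp [IsSelfAdjoint]))
  have hn0 : (n : ℝ) ≠ 0 := by positivity
  have hsumH : ∑ i, (H i * H i).trace = ((n * (a - d / n ^ 2) : ℝ) : ℂ) := by
    rw [sum_trace_mul_self_sub_smul_one hsum, Finset.sum_congr rfl fun i _ => ha i]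
    simp only [Finset.sum_const, Finset.card_univ, Fintype.card_fin, nsmul_eq_mul]
    push_cast
    field_simp
    ring
  have hnonneg : ∀ i ∈ Finset.univ, 0 ≤ (H i * H i).trace := fun i _ =>
    (hH i).trace_mul_self_nonneg
  refine ⟨?_, fun ha_eq i => ?_⟩
  · have hpos := hsumH ▸ Finset.sum_nonneg hnonneg
    rw [Complex.zero_le_real, mul_nonneg_iff_of_pos_left (by positivity)] at hpos
    exact sub_nonneg.mp hpos
  · have hzero : ∑ i, (H i * H i).trace = 0 := by simp [hsumH, ha_eq]
    have hHi := (Finset.sum_eq_zero_iff_of_nonneg hnonneg).mp hzero i (Finset.mem_univ i)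
    exact sub_eq_zero.mp ((hH i).trace_mul_self_eq_zero_iff.mp hHi)

/-- For a GSIC POVM `(G i)_{i=1}^n` on `ℂ^d` with constants `a`, `b`,
we have `a ≥ d/n²`, and if `a = d/n²` then every `G i` equals `(1/n) • I`. -/
theorem gsic_purity_lower_bound (d n : ℕ) (hd : 2 ≤ d) (hn : 1 ≤ n)
    (G : Fin n → Matrix (Fin d) (Fin d) ℂ)
    (hpsd : ∀ i, (G i).PosSemidef)
    (hsum : ∑ i, G i = 1)
    (a b : ℝ)
    (ha : ∀ i, (G i * G i).trace = (a : ℂ))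
    (hb : ∀ i j, i ≠ j → (G i * G j).trace = (b : ℂ)) :
    (d : ℝ) / n ^ 2 ≤ a ∧
      (a = (d : ℝ) / n ^ 2 → ∀ i, G i = (1 / (n : ℂ)) • (1 : Matrix (Fin d) (Fin d) ℂ)) :=
  gsic_purity_lower_bound_general d n hn G hpsd hsum a ha
end

section
/- Let d ≥ 2 and n ≥ 1, and let (G_i)_{i=1}^n be a GSIC POVM with n elements on ℂ^d with constants a and b. Then a ≤ d²/n², and equality a = d²/n² holds if and only if every G_i has rank 1. -/
/-! With `λ` the eigenvalues of a positive semidefinite `A`, `tr (A²) = ∑ λ² ≤ (∑ λ)² = (tr A)²`,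
with equality exactly when at most one `λ` is nonzero, i.e. when `rank A ≤ 1`. The traces of the
`G i` are nonnegative and sum to `d`, so the smallest is at most `d / n` and `a ≤ (d / n)²`.
Equality forces every trace to be `d / n` and hence `tr (G i ^ 2) = (tr G i)²` for every `i`. -/

open scoped ComplexOrder

open Finset

theorem sum_sq_eq_sq_sum_iff_card_ne_zero_le_one {ι R : Type*} [Fintype ι] [CommRing R]
    [LinearOrder R] [IsStrictOrderedRing R] {f : ι → R} (hf : ∀ i, 0 ≤ f i) :
    ∑ i, f i ^ 2 = (∑ i, f i) ^ 2 ↔ Fintype.card {i // f i ≠ 0} ≤ 1 := by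
  classical
  have hexpand : (∑ i, f i) ^ 2 = ∑ i, f i ^ 2 + ∑ i, ∑ j ∈ univ.erase i, f i * f j := by
    rw [sq, sum_mul_sum, ← sum_add_distrib]
    exact sum_congr rfl fun i _ => by rw [← add_sum_erase _ _ (mem_univ i), sq]
  have hnonneg : ∀ i ∈ univ, 0 ≤ ∑ j ∈ univ.erase i, f i * f j :=
    fun i _ => sum_nonneg fun j _ => mul_nonneg (hf i) (hf j)
  rw [hexpand, left_eq_add, sum_eq_zero_iff_of_nonneg hnonneg, Fintype.card_le_one_iff]
  simp only [mem_univ, forall_const, sum_eq_zero_iff_of_nonneg fun j _ => mul_nonneg (hf _) (hf j),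
    mem_erase, and_true, mul_eq_zero, Subtype.forall, Subtype.mk.injEq]
  grind

section Mean

variable {ι : Type*} [Fintype ι] [Nonempty ι] {t : ι → ℝ} {a : ℝ}

theorem le_sq_mean_of_forall_le_sq (ht : ∀ i, 0 ≤ t i) (ha : ∀ i, a ≤ t i ^ 2) :
    a ≤ ((∑ i, t i) / Fintype.card ι) ^ 2 := by
  have hcard : (0 : ℝ) < Fintype.card ι := by exact_mod_cast Fintype.card_pos
  obtain ⟨i, -, hi⟩ := exists_le_of_sum_le (f := t)
    (g := fun _ => (∑ i, t i) / Fintype.card ι) univ_nonempty (by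
      rw [sum_const, card_univ, nsmul_eq_mul, mul_div_cancel₀ _ hcard.ne'])
  exact (ha i).trans (pow_le_pow_left₀ (ht i) hi 2)

theorem eq_sq_mean_iff_forall_eq_sq (ht : ∀ i, 0 ≤ t i) (ha : ∀ i, a ≤ t i ^ 2) :
    a = ((∑ i, t i) / Fintype.card ι) ^ 2 ↔ ∀ i, a = t i ^ 2 := by
  have hcard : (0 : ℝ) < Fintype.card ι := by exact_mod_cast Fintype.card_pos
  set m := (∑ i, t i) / Fintype.card ι
  constructor
  · rintro rfl
    have hm : 0 ≤ m := div_nonneg (sum_nonneg fun i _ => ht i) hcard.le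
    have hle : ∀ i ∈ univ, m ≤ t i :=
      fun i _ => (pow_le_pow_iff_left₀ hm (ht i) two_ne_zero).mp (ha i)
    have hsum : ∑ _i : ι, m = ∑ i, t i := by
      rw [sum_const, card_univ, nsmul_eq_mul, mul_div_cancel₀ _ hcard.ne']
    intro i
    rw [(sum_eq_sum_iff_of_le hle).mp hsum i (mem_univ i)]
  · intro h
    obtain ⟨i₀⟩ := ‹Nonempty ι›
    have hconst : ∀ i, t i = t i₀ := fun i =>
      (sq_eq_sq₀ (ht i) (ht i₀)).mp ((h i).symm.trans (h i₀))
    have hm : m = t i₀ := by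
      simp only [m, hconst, sum_const, card_univ, nsmul_eq_mul]
      field_simp
    rw [hm, h i₀]

end Mean

namespace Matrix

variable {𝕜 m : Type*} [RCLike 𝕜] [Fintype m] [DecidableEq m] {A : Matrix m m 𝕜}

lemma IsHermitian.re_trace_mul_self (hA : A.IsHermitian) :
    RCLike.re (A * A).trace = ∑ i, hA.eigenvalues i ^ 2 := by
  conv_lhs => rw [hA.spectral_theorem, ← map_mul, Unitary.conjStarAlgAut_apply, trace_mul_cycle,
    Unitary.coe_star_mul_self, one_mul, diagonal_mul_diagonal, trace_diagonal]
  simp [sq]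

lemma IsHermitian.re_trace (hA : A.IsHermitian) :
    RCLike.re A.trace = ∑ i, hA.eigenvalues i := by
  simp [hA.trace_eq_sum_eigenvalues]

lemma PosSemidef.re_trace_mul_self_le (hA : A.PosSemidef) :
    RCLike.re (A * A).trace ≤ RCLike.re A.trace ^ 2 := by
  rw [hA.1.re_trace_mul_self, hA.1.re_trace]
  exact sum_sq_le_sq_sum_of_nonneg fun i _ => hA.eigenvalues_nonneg i

lemma PosSemidef.rank_eq_one_iff (hA : A.PosSemidef) :
    A.rank = 1 ↔
      RCLike.re (A * A).trace = RCLike.re A.trace ^ 2 ∧ RCLike.re (A * A).trace ≠ 0 := by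
  rw [hA.1.re_trace_mul_self, hA.1.re_trace, hA.1.rank_eq_card_non_zero_eigs,
    sum_sq_eq_sq_sum_iff_card_ne_zero_le_one hA.eigenvalues_nonneg, Ne,
    sum_eq_zero_iff_of_nonneg fun i _ => sq_nonneg _]
  simp only [mem_univ, forall_const, pow_eq_zero_iff two_ne_zero]
  rw [not_forall,
    ← (Fintype.card_pos_iff (α := {i // hA.1.eigenvalues i ≠ 0})).trans nonempty_subtype]
  omega

end Matrix

theorem gsic_purity_upper_bound_general (d n : ℕ) (hd : 2 ≤ d) (hn : 1 ≤ n)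
    (G : Fin n → Matrix (Fin d) (Fin d) ℂ)
    (hpsd : ∀ i, (G i).PosSemidef)
    (hsum : ∑ i, G i = 1)
    (a : ℝ)
    (ha : ∀ i, (G i * G i).trace = (a : ℂ)) :
    a ≤ (d : ℝ) ^ 2 / n ^ 2 ∧
      (a = (d : ℝ) ^ 2 / n ^ 2 ↔ ∀ i, (G i).rank = 1) := by
  have : Nonempty (Fin n) := ⟨⟨0, hn⟩⟩
  set t : Fin n → ℝ := fun i => (G i).trace.re
  have ht : ∀ i, 0 ≤ t i := fun i => (RCLike.nonneg_iff.mp (hpsd i).trace_nonneg).1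
  have hre : ∀ i, (G i * G i).trace.re = a := fun i => by rw [ha i, Complex.ofReal_re]
  have hle : ∀ i, a ≤ t i ^ 2 := fun i => hre i ▸ (hpsd i).re_trace_mul_self_le
  have hrank : ∀ i, (G i).rank = 1 ↔ a = t i ^ 2 ∧ a ≠ 0 := fun i => by
    rw [(hpsd i).rank_eq_one_iff, RCLike.re_to_complex, RCLike.re_to_complex, hre]
  have hmean : (∑ i, t i) / Fintype.card (Fin n) = d / n := by
    simp [t, ← Complex.re_sum, ← Matrix.trace_sum, hsum]
  have hbound := le_sq_mean_of_forall_le_sq ht hle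
  have hiff := eq_sq_mean_iff_forall_eq_sq ht hle
  rw [hmean, div_pow] at hbound hiff
  refine ⟨hbound, fun h i => (hrank i).2 ⟨hiff.1 h i, ?_⟩,
    fun h => hiff.2 fun i => ((hrank i).1 (h i)).1⟩
  simpa [h] using (show d ≠ 0 ∧ n ≠ 0 by omega)

/-- For a GSIC POVM `(G i)_{i=1}^n` on `ℂ^d` with constants `a`, `b`,
we have `a ≤ d²/n²`, with equality iff every `G i` has rank 1. -/
theorem gsic_purity_upper_bound (d n : ℕ) (hd : 2 ≤ d) (hn : 1 ≤ n)
    (G : Fin n → Matrix (Fin d) (Fin d) ℂ)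
    (hpsd : ∀ i, (G i).PosSemidef)
    (hsum : ∑ i, G i = 1)
    (a b : ℝ)
    (ha : ∀ i, (G i * G i).trace = (a : ℂ))
    (hb : ∀ i j, i ≠ j → (G i * G j).trace = (b : ℂ)) :
    a ≤ (d : ℝ) ^ 2 / n ^ 2 ∧
      (a = (d : ℝ) ^ 2 / n ^ 2 ↔ ∀ i, (G i).rank = 1) :=
  gsic_purity_upper_bound_general d n hd hn G hpsd hsum a ha
end

section
/- Let d ≥ 2 and n ≥ 1, and let (G_i)_{i=1}^n be a GSIC POVM with n elements on ℂ^d with constants a and b. If a ≠ b, then the family (G_i)_{i=1}^n is linearly independent in the complex vector space of d×d complex matrices. -/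
open scoped ComplexOrder

/-- A GSIC POVM `(G i)_{i=1}^n` on `ℂ^d` with constants `a ≠ b`
is linearly independent in the space of `d × d` complex matrices. -/
theorem gsic_linearIndependent (d n : ℕ) (hd : 2 ≤ d) (hn : 1 ≤ n)
    (G : Fin n → Matrix (Fin d) (Fin d) ℂ)
    (hpsd : ∀ i, (G i).PosSemidef)
    (hsum : ∑ i, G i = 1)
    (a b : ℝ)
    (ha : ∀ i, (G i * G i).trace = (a : ℂ))
    (hb : ∀ i j, i ≠ j → (G i * G j).trace = (b : ℂ))
    (hab : a ≠ b) :
    LinearIndependent ℂ G := by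
  rw [Fintype.linearIndependent_iff]
  intro g hg
  have hab' : (a : ℂ) - b ≠ 0 := by
    intro h
    apply hab
    have := sub_eq_zero.mp h
    exact_mod_cast this
  have key : ∀ j, g j * ((a : ℂ) - b) + (∑ i, g i) * b = 0 := by
    intro j
    have h0 : ((∑ i, g i • G i) * G j).trace = 0 := by
      rw [hg]; simp
    rw [Finset.sum_mul, Matrix.trace_sum] at h0
    have hterm : ∀ i : Fin n, ((g i • G i) * G j).trace
        = g i * (b : ℂ) + (if i = j then g i * ((a : ℂ) - b) else 0) := by
      intro i
      rw [Matrix.smul_mul, Matrix.trace_smul]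
      by_cases h : i = j
      · subst h; rw [ha i]; simp; ring
      · rw [hb i j h]; simp [h]
    rw [Finset.sum_congr rfl (fun i _ => hterm i), Finset.sum_add_distrib,
      Finset.sum_ite_eq' Finset.univ j (fun i => g i * ((a : ℂ) - b))] at h0
    simp only [Finset.mem_univ, if_true] at h0
    rw [← Finset.sum_mul] at h0
    linear_combination h0
  set j0 : Fin n := ⟨0, hn⟩
  have hconst : ∀ j, g j = g j0 := by
    intro j
    have h1 := key j
    have h2 := key j0
    have : g j * ((a : ℂ) - b) = g j0 * ((a : ℂ) - b) := by linear_combination h1 - h2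
    exact mul_right_cancel₀ hab' this
  have hzero : g j0 * (d : ℂ) = 0 := by
    have : (∑ i, g i • G i) = g j0 • (1 : Matrix (Fin d) (Fin d) ℂ) := by
      rw [← hsum, Finset.smul_sum]
      exact Finset.sum_congr rfl (fun i _ => by rw [hconst i])
    rw [this] at hg
    have := congrArg Matrix.trace hg
    simpa [Matrix.trace_smul, Matrix.trace_one] using this
  have hd0 : (d : ℂ) ≠ 0 := by
    exact_mod_cast (by omega : d ≠ 0)
  intro i
  rw [hconst i]
  exact (mul_eq_zero.mp hzero).resolve_right hd0
end

section
/- Let d ≥ 2 and let (A_i)_{i=1}^{d²} be a COB on ℂ^d. Then no element A_i is positive semidefinite; equivalently, every A_i has a strictly negative eigenvalue. -/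
/-! Pairing `A i` with `∑ j, A j = 1` gives `tr (A i) = 1 / d`, and orthogonality gives
`tr (A i ^ 2) = 1 / d`. For a positive semidefinite matrix the eigenvalues are nonnegative, so
`tr (A ^ 2) ≤ (tr A) ^ 2`; this would force `1 / d ≤ 1 / d ^ 2`, impossible for `d ≥ 2`. -/

open scoped ComplexOrder

namespace Matrix

variable {n 𝕜 : Type*} [Fintype n] [DecidableEq n] [RCLike 𝕜] {A : Matrix n n 𝕜}

theorem IsHermitian.trace_pow_eq_sum_eigenvalues_pow (hA : A.IsHermitian) (k : ℕ) :
    (A ^ k).trace = ∑ i, (hA.eigenvalues i : 𝕜) ^ k := by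
  conv_lhs => rw [hA.spectral_theorem, ← map_pow, diagonal_pow, Unitary.conjStarAlgAut_apply,
    trace_mul_cycle, Unitary.coe_star_mul_self, one_mul, trace_diagonal]
  rfl

theorem PosSemidef.trace_sq_le_sq_trace (hA : A.PosSemidef) : (A ^ 2).trace ≤ A.trace ^ 2 := by
  rw [hA.isHermitian.trace_pow_eq_sum_eigenvalues_pow, hA.isHermitian.trace_eq_sum_eigenvalues]
  exact_mod_cast Finset.sum_sq_le_sq_sum_of_nonneg fun i _ ↦ hA.eigenvalues_nonneg i

end Matrix

theorem Matrix.trace_eq_of_trace_mul_eq_ite_of_sum_eq_one {ι n R : Type*} [Fintype ι]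
    [DecidableEq ι] [Fintype n] [DecidableEq n] [CommSemiring R] {A : ι → Matrix n n R} {c : R}
    (horth : ∀ i j, (A i * A j).trace = if i = j then c else 0) (hsum : ∑ j, A j = 1) (i : ι) :
    (A i).trace = c := by
  rw [← mul_one (A i), ← hsum, Finset.mul_sum, trace_sum]
  simp [horth]

/-- No element of a complete orthogonal basis (COB) on `ℂ^d` is
positive semidefinite; equivalently, every element has a strictly negative
eigenvalue. -/
theorem cob_not_posSemidef (d : ℕ) (hd : 2 ≤ d)
    (A : Fin (d ^ 2) → Matrix (Fin d) (Fin d) ℂ)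
    (hherm : ∀ i, (A i).IsHermitian)
    (horth : ∀ i j, (A i * A j).trace = if i = j then (1 / (d : ℂ)) else 0)
    (hsum : ∑ i, A i = 1) :
    ∀ i, ¬ (A i).PosSemidef ∧ ∃ k, (hherm i).eigenvalues k < 0 := by
  intro i
  have hnot : ¬ (A i).PosSemidef := fun hpsd ↦ by
    have h := hpsd.trace_sq_le_sq_trace
    rw [sq (A i), horth, if_pos rfl,
      Matrix.trace_eq_of_trace_mul_eq_ite_of_sum_eq_one horth hsum i] at h
    have hd_real : (2 : ℝ) ≤ d := by exact_mod_cast hd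
    have hinv : 1 / (d : ℝ) ≤ (1 / (d : ℝ)) ^ 2 := Complex.real_le_real.mp (by push_cast; exact h)
    rw [div_pow, one_pow, one_div_le_one_div (by positivity) (by positivity)] at hinv
    nlinarith
  refine ⟨hnot, ?_⟩
  by_contra! h
  exact hnot ((hherm i).posSemidef_iff_eigenvalues_nonneg.mpr h)
end

section
/- Let d ≥ 2 and let x_1 ≥ x_2 ≥ … ≥ x_d be real numbers satisfying ∑_{i=1}^d x_i = 1/d and ∑_{i=1}^d x_i² = 1/d. Then x_d < 0 and |x_d| ≥ (√(d+1) − 1)/d². Moreover, equality |x_d| = (√(d+1) − 1)/d² holds if and only if x_1 = (1 + (d−1)√(d+1))/d² and x_2 = x_3 = … = x_d = (1 − √(d+1))/d². -/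
set_option maxHeartbeats 1000000

/-- Lemma on `d`-tuples of reals in descending order with
`∑ xᵢ = 1/d` and `∑ xᵢ² = 1/d`: the minimum `x_d` is negative, its absolute
value satisfies `|x_d| ≥ (√(d+1) - 1)/d²`, with equality iff
`x₁ = (1 + (d-1)√(d+1))/d²` and all other entries equal `(1 - √(d+1))/d²`. -/
theorem descending_tuple_min_bound (d : ℕ) (hd : 2 ≤ d) (x : Fin d → ℝ)
    (hdesc : ∀ i j : Fin d, i ≤ j → x j ≤ x i)
    (hsum : ∑ i, x i = 1 / d)
    (hsq : ∑ i, (x i) ^ 2 = 1 / d) :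
    x ⟨d - 1, by omega⟩ < 0 ∧
    (Real.sqrt (d + 1) - 1) / d ^ 2 ≤ |x ⟨d - 1, by omega⟩| ∧
    (|x ⟨d - 1, by omega⟩| = (Real.sqrt (d + 1) - 1) / d ^ 2 ↔
      (x ⟨0, by omega⟩ = (1 + ((d : ℝ) - 1) * Real.sqrt (d + 1)) / d ^ 2 ∧
        ∀ i : Fin d, i ≠ ⟨0, by omega⟩ → x i = (1 - Real.sqrt (d + 1)) / d ^ 2)) := by
  have hd1 : 0 < d := by omega
  set last : Fin d := ⟨d - 1, by omega⟩ with hlast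
  set fst : Fin d := ⟨0, by omega⟩ with hfst
  set D : ℝ := (d : ℝ) with hDdef
  have hD2 : (2:ℝ) ≤ D := by rw [hDdef]; exact_mod_cast hd
  have hDpos : (0:ℝ) < D := by linarith
  set m := x last with hmdef
  set M := x fst with hMdef
  clear_value D
  have hmle : ∀ i : Fin d, m ≤ x i := by
    intro i
    exact hdesc i last (by simp only [hlast, Fin.le_def]; omega)
  have hMge : ∀ i : Fin d, x i ≤ M := by
    intro i
    exact hdesc fst i (by simp only [hfst, Fin.le_def]; omega)
  clear_value m M
  -- m < 0
  have hmneg : m < 0 := by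
    by_contra h
    push_neg at h
    have hnn : ∀ i : Fin d, 0 ≤ x i := fun i => le_trans h (hmle i)
    have hle : ∀ i : Fin d, x i ≤ 1 / D := by
      intro i
      rw [← hsum]
      exact Finset.single_le_sum (fun j _ => hnn j) (Finset.mem_univ i)
    have hlt : ∑ i, (x i)^2 ≤ ∑ i, x i * (1/D) := by
      apply Finset.sum_le_sum
      intro i _
      rw [sq]
      exact mul_le_mul_of_nonneg_left (hle i) (hnn i)
    rw [← Finset.sum_mul, hsum, hsq, div_mul_div_comm, one_mul] at hlt
    rw [div_le_div_iff₀ hDpos (mul_pos hDpos hDpos)] at hlt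
    nlinarith [hlt]
  -- key inequality 1 : sum of (x i - m)(M - x i) ≥ 0
  have expand : ∑ i, (x i - m) * (M - x i) = (M+m) * (1/D) - 1/D - D * (m*M) := by
    have h : ∀ i : Fin d, (x i - m) * (M - x i) = (M+m) * x i - (x i)^2 - m*M := by
      intro i; ring
    rw [Finset.sum_congr rfl (fun i _ => h i)]
    rw [Finset.sum_sub_distrib, Finset.sum_sub_distrib, ← Finset.mul_sum,
      Finset.sum_const, Finset.card_univ, Fintype.card_fin, nsmul_eq_mul, hsum, hsq]
    try rw [hDdef]
    try ring
  have key1 : 0 ≤ (M+m) * (1/D) - 1/D - D * (m*M) := by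
    rw [← expand]
    exact Finset.sum_nonneg fun i _ =>
      mul_nonneg (sub_nonneg.2 (hmle i)) (sub_nonneg.2 (hMge i))
  have K1 : 1 + D^2*(m*M) ≤ M + m := by
    have h := mul_le_mul_of_nonneg_left key1 hDpos.le
    rw [mul_zero] at h
    have hDne : D ≠ 0 := hDpos.ne'
    field_simp at h
    nlinarith [h]
  -- key inequality 2
  have hsplit : x fst + ∑ i ∈ Finset.univ.erase fst, x i = 1/D := by
    rw [Finset.add_sum_erase _ x (Finset.mem_univ fst), hsum]
  have hcard : (Finset.univ.erase fst).card = d - 1 := by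
    rw [Finset.card_erase_of_mem (Finset.mem_univ fst), Finset.card_univ, Fintype.card_fin]
  have hc : ((d-1:ℕ):ℝ) = D - 1 := by
    rw [Nat.cast_sub (by omega)]; simp [hDdef]
  have herase_ge : (D - 1) * m ≤ ∑ i ∈ Finset.univ.erase fst, x i := by
    have h1 := Finset.card_nsmul_le_sum (Finset.univ.erase fst) x m (fun i _ => hmle i)
    rw [hcard, nsmul_eq_mul, hc] at h1
    exact h1
  have K2 : D*M + D*(D-1)*m ≤ 1 := by
    have h : M + (D-1)*m ≤ 1/D := by
      have := hsplit
      linarith [herase_ge]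
    have h2 := mul_le_mul_of_nonneg_left h hDpos.le
    rw [mul_one_div, div_self hDpos.ne'] at h2
    nlinarith [h2]
  -- main polynomial inequality : D^3 m^2 - 2 D m - 1 ≥ 0
  have h1slack : 0 ≤ M + m - D^2*(m*M) - 1 := by linarith
  have h2slack : 0 ≤ 1 - (D*M + D*(D-1)*m) := by linarith
  have hpos1 : 0 < 1 - D^2*m := by nlinarith [mul_pos (pow_pos hDpos 2) (neg_pos.mpr hmneg)]
  have hg : 0 ≤ D^3*m^2 - 2*D*m - 1 := by
    have hid : D*(M + m - D^2*(m*M) - 1) + (1 - D^2*m)*(1 - (D*M + D*(D-1)*m))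
        = (D-1)*(D^3*m^2 - 2*D*m - 1) := by ring
    have hA : 0 ≤ D*(M + m - D^2*(m*M) - 1) := mul_nonneg hDpos.le h1slack
    have hB : 0 ≤ (1 - D^2*m)*(1 - (D*M + D*(D-1)*m)) := mul_nonneg hpos1.le h2slack
    have hRHS : 0 ≤ (D-1)*(D^3*m^2 - 2*D*m - 1) := by rw [← hid]; linarith
    nlinarith [hRHS, hD2]
  have ha2 : D + 1 ≤ (1 - D^2*m)^2 := by linarith [mul_nonneg hDpos.le hg, sq_abs (1 - D^2*m), sq_nonneg (1 - D^2*m)]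
  have hsq1 : Real.sqrt (D+1) ≤ 1 - D^2*m := by
    calc Real.sqrt (D+1) ≤ Real.sqrt ((1 - D^2*m)^2) := Real.sqrt_le_sqrt ha2
      _ = 1 - D^2*m := Real.sqrt_sq hpos1.le
  have habs : |m| = -m := abs_of_neg hmneg
  have hbound : (Real.sqrt (D + 1) - 1) / D ^ 2 ≤ |m| := by
    rw [habs, div_le_iff₀ (by positivity)]
    linarith [hsq1]
  have hsqrt_sq : Real.sqrt (D+1)^2 = D+1 := Real.sq_sqrt (by positivity)
  have hsqrt1 : 1 ≤ Real.sqrt (D+1) := by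
    have h := Real.sqrt_le_sqrt (show (1:ℝ) ≤ D+1 by linarith)
    rwa [Real.sqrt_one] at h
  have hlastnefst : last ≠ fst := by
    simp only [hlast, hfst, ne_eq, Fin.mk.injEq]
    omega
  clear_value last fst
  refine ⟨hmneg, hbound, ?_, ?_⟩
  · -- equality implies
    intro heq
    have hDsqne : (D:ℝ)^2 ≠ 0 := by positivity
    have hmex : m = (1 - Real.sqrt (D+1)) / D^2 := by
      rw [habs] at heq
      rw [eq_div_iff hDsqne]
      rw [eq_div_iff hDsqne] at heq
      linarith [heq]
    have hmex' : D^2 * m = 1 - Real.sqrt (D+1) := by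
      rw [hmex, mul_comm, div_mul_cancel₀ _ hDsqne]
    have hg0 : D^3*m^2 - 2*D*m - 1 = 0 := by
      have e1 : (D^2*m)^2 = (1 - Real.sqrt (D+1))^2 := by rw [hmex']
      have hDg : D*(D^3*m^2 - 2*D*m - 1) = 0 := by
        linear_combination e1 + hsqrt_sq - 2*hmex'
      exact (mul_eq_zero.mp hDg).resolve_left hDpos.ne'
    have hgD : (D-1)*(D^3*m^2 - 2*D*m - 1) = 0 := by rw [hg0]; ring
    have hA : 0 ≤ D*(M + m - D^2*(m*M) - 1) := mul_nonneg hDpos.le h1slack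
    have hB : 0 ≤ (1 - D^2*m)*(1 - (D*M + D*(D-1)*m)) := mul_nonneg hpos1.le h2slack
    have hprod : (1 - D^2*m) * (1 - (D*M + D*(D-1)*m)) = 0 := by
      linarith [hgD, hA, hB]
    have hs2 : D*M + D*(D-1)*m = 1 := by
      rcases mul_eq_zero.mp hprod with h | h
      · linarith
      · linarith
    have hsum_erase : ∑ i ∈ Finset.univ.erase fst, (x i - m) = 0 := by
      rw [Finset.sum_sub_distrib, Finset.sum_const, hcard, nsmul_eq_mul, hc]
      have hse : ∑ i ∈ Finset.univ.erase fst, x i = 1/D - M := by linarith [hsplit]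
      rw [hse]
      have h5 : (1/D)*D = 1 := by field_simp
      have h6 : (1/D - M - (D-1)*m)*D = 1 - D*M - D*(D-1)*m := by
        rw [sub_mul, sub_mul, h5]; ring
      have h7 : (1/D - M - (D-1)*m)*D = 0 := by rw [h6]; linarith [hs2]
      have := (mul_eq_zero.mp h7).resolve_right hDpos.ne'
      linarith [this]
    have hall : ∀ i ∈ Finset.univ.erase fst, x i = m := by
      intro i hi
      have h := (Finset.sum_eq_zero_iff_of_nonneg
        (fun j _ => sub_nonneg.2 (hmle j))).mp hsum_erase i hi
      linarith
    constructor
    · rw [eq_div_iff (by positivity : (D:ℝ)^2 ≠ 0)]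
      linear_combination D*hs2 - (D-1)*hmex'
    · intro i hi
      have : x i = m := hall i (Finset.mem_erase.mpr ⟨hi, Finset.mem_univ i⟩)
      rw [this, hmex]
  · -- values imply equality
    rintro ⟨h0, hrest⟩
    have hmval : m = (1 - Real.sqrt (D+1)) / D^2 := by
      rw [hmdef]; exact hrest last hlastnefst
    rw [habs, hmval]
    ring
end

section
/- Let d ≥ 2, let (A_i)_{i=1}^{d²} be a COB on ℂ^d, let m_i be the smallest eigenvalue of A_i, τ := max_i |m_i|, and λ* := 1/(1 + d²τ). Then for every real λ with 0 < λ ≤ λ*, the matrices G_i := λ·A_i + ((1−λ)/d²)·I (i = 1,…,d²) form a GSIC POVM: each G_i is positive semidefinite, ∑_{i=1}^{d²} G_i = I, tr(G_i²) = λ²/d + (1−λ²)/d³ for every i, and tr(G_i G_j) = (1−λ²)/d³ for every i ≠ j. -/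
/-!
Write `G i = λ • A i + c • 1` with `c = (1 - λ) / d²`. Orthogonality together with `∑ j, A j = 1`
gives `tr (A i) = tr (A i * ∑ j, A j) = 1 / d`, and then the sum and the trace identities are
bilinear expansions. For positivity, every eigenvalue of `A i` is at least `-τ`, so
`G i = λ • (A i + τ • 1) + (c - λ τ) • 1` is a sum of positive semidefinite matrices; the
condition `λ ≤ λ*` is exactly `λ τ ≤ c`.
-/

open scoped ComplexOrder

namespace Matrix

section Hermitian
variable {𝕜 n : Type*} [RCLike 𝕜] [Fintype n] [DecidableEq n] {A : Matrix n n 𝕜}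

lemma IsHermitian.posSemidef_add_smul_one (hA : A.IsHermitian) {c : ℝ}
    (h : ∀ k, -c ≤ hA.eigenvalues k) : (A + (c : 𝕜) • 1).PosSemidef := by
  refine posSemidef_iff_isHermitian_and_spectrum_nonneg.mpr
    ⟨hA.add (isHermitian_one.smul (RCLike.conj_ofReal c)), ?_⟩
  rw [← Algebra.algebraMap_eq_smul_one, ← spectrum.add_singleton_eq, hA.spectrum_eq_image_range]
  rintro _ ⟨_, ⟨_, ⟨k, rfl⟩, rfl⟩, _, rfl, rfl⟩
  show (0 : 𝕜) ≤ (hA.eigenvalues k : 𝕜) + (c : 𝕜)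
  exact_mod_cast (show (0 : ℝ) ≤ hA.eigenvalues k + c by linarith [h k])

lemma IsHermitian.posSemidef_smul_add_smul_one (hA : A.IsHermitian) {s c τ : ℝ} (hs : 0 ≤ s)
    (hτ : ∀ k, -τ ≤ hA.eigenvalues k) (hsτ : s * τ ≤ c) :
    ((s : 𝕜) • A + (c : 𝕜) • 1).PosSemidef := by
  have hsplit : (s : 𝕜) • A + (c : 𝕜) • 1
      = (s : 𝕜) • (A + (τ : 𝕜) • 1) + ((c - s * τ : ℝ) : 𝕜) • 1 := by
    push_cast
    rw [smul_add, smul_smul, add_assoc, ← add_smul]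
    ring_nf
  rw [hsplit]
  exact ((hA.posSemidef_add_smul_one hτ).smul (by exact_mod_cast hs)).add
    (PosSemidef.one.smul (by exact_mod_cast sub_nonneg.mpr hsτ))

end Hermitian

section Trace
variable {ι n R : Type*} [Fintype ι] [Fintype n] [DecidableEq n] [CommRing R]

theorem trace_eq_of_trace_mul_eq_ite [DecidableEq ι] {A : ι → Matrix n n R} {a : R}
    (horth : ∀ i j, (A i * A j).trace = if i = j then a else 0) (hsum : ∑ i, A i = 1) (i : ι) :
    (A i).trace = a :=
  calc (A i).trace = (A i * ∑ j, A j).trace := by rw [hsum, mul_one]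
    _ = ∑ j, (A i * A j).trace := by rw [Finset.mul_sum, trace_sum]
    _ = a := by simp [horth]

theorem trace_smul_add_smul_one_mul (A B : Matrix n n R) (s c : R) :
    ((s • A + c • 1) * (s • B + c • 1)).trace
      = s ^ 2 * (A * B).trace + s * c * (A.trace + B.trace) + c ^ 2 * Fintype.card n := by
  simp only [add_mul, mul_add, smul_mul, Matrix.mul_smul, Matrix.mul_one, one_mul, trace_add,
    trace_smul, trace_one, smul_eq_mul]
  ring

omit [Fintype n] in
theorem sum_smul_add_smul_one {A : ι → Matrix n n R} (hsum : ∑ i, A i = 1) (s c : R) :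
    ∑ i, (s • A i + c • 1) = (s + Fintype.card ι * c) • (1 : Matrix n n R) := by
  rw [Finset.sum_add_distrib, ← Finset.smul_sum, hsum, Finset.sum_const, Finset.card_univ,
    ← Nat.cast_smul_eq_nsmul R, smul_smul, add_smul]

end Trace

end Matrix

/-- From any COB `(A i)` on `ℂ^d` and any `0 < λ ≤ λ*`, the
matrices `G i := λ • A i + ((1-λ)/d²) • I` form a GSIC POVM with constants
`a = λ²/d + (1-λ²)/d³` and `b = (1-λ²)/d³`. -/
theorem cob_to_gsic (d : ℕ) (hd : 2 ≤ d)
    (A : Fin (d ^ 2) → Matrix (Fin d) (Fin d) ℂ)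
    (hherm : ∀ i, (A i).IsHermitian)
    (horth : ∀ i j, (A i * A j).trace = if i = j then (1 / (d : ℂ)) else 0)
    (hsum : ∑ i, A i = 1)
    (m : Fin (d ^ 2) → ℝ) (hm : ∀ i, m i = ⨅ k, (hherm i).eigenvalues k)
    (τ : ℝ) (hτ : τ = ⨆ i, |m i|)
    (lamStar : ℝ) (hlamStar : lamStar = 1 / (1 + d ^ 2 * τ))
    (l : ℝ) (hl0 : 0 < l) (hl : l ≤ lamStar)
    (G : Fin (d ^ 2) → Matrix (Fin d) (Fin d) ℂ)
    (hG : ∀ i, G i = (l : ℂ) • A i +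
      (((1 - l) / d ^ 2 : ℝ) : ℂ) • (1 : Matrix (Fin d) (Fin d) ℂ)) :
    (∀ i, (G i).PosSemidef) ∧
    (∑ i, G i = 1) ∧
    (∀ i, (G i * G i).trace = ((l ^ 2 / d + (1 - l ^ 2) / d ^ 3 : ℝ) : ℂ)) ∧
    (∀ i j, i ≠ j → (G i * G j).trace = (((1 - l ^ 2) / d ^ 3 : ℝ) : ℂ)) := by
  set c : ℝ := (1 - l) / d ^ 2 with hc
  have hd0 : (0 : ℝ) < d := by positivity
  have hτ_ge : ∀ i, |m i| ≤ τ := fun i => hτ ▸ Finite.le_ciSup (fun j => |m j|) i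
  have heig : ∀ i k, -τ ≤ (hherm i).eigenvalues k := fun i k => by
    linarith [neg_abs_le (m i), hτ_ge i, hm i ▸ Finite.ciInf_le (hherm i).eigenvalues k]
  have hlτ : l * τ ≤ c := by
    have hτ0 : 0 ≤ τ := (abs_nonneg _).trans (hτ_ge ⟨0, by positivity⟩)
    rw [hlamStar, le_div_iff₀ (by positivity)] at hl
    rw [hc, le_div_iff₀ (by positivity)]
    nlinarith
  have htrA := Matrix.trace_eq_of_trace_mul_eq_ite horth hsum
  have htr : ∀ i j, (G i * G j).trace
      = (l : ℂ) ^ 2 * (if i = j then 1 / (d : ℂ) else 0) + l * c * (2 / d) + (c : ℂ) ^ 2 * d := by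
    intro i j
    rw [hG, hG, Matrix.trace_smul_add_smul_one_mul, horth, htrA, htrA, Fintype.card_fin]
    ring
  refine ⟨fun i => hG i ▸ (hherm i).posSemidef_smul_add_smul_one hl0.le (heig i) hlτ,
    ?_, fun i => ?_, fun i j hij => ?_⟩
  · simp_rw [hG]
    rw [Matrix.sum_smul_add_smul_one hsum, Fintype.card_fin]
    convert one_smul ℂ (1 : Matrix (Fin d) (Fin d) ℂ)
    rw [hc]
    push_cast
    field_simp
    ring
  · rw [htr, if_pos rfl, hc]
    push_cast
    field_simp
    ring
  · rw [htr, if_neg hij, hc]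
    push_cast
    field_simp
    ring
end

section
/- Let d ≥ 2 and let (G_i)_{i=1}^{d²} be a GSIC POVM with d² elements on ℂ^d with constants a and b, and assume a > 1/d³ (equivalently b < 1/d³, by a + (d²−1)b = 1/d). Set λ := √(1 − b·d³) = √((d³a − 1)/(d² − 1)). Then the matrices A_i := (1/λ)·(G_i − ((1−λ)/d²)·I) form a COB on ℂ^d: each A_i is Hermitian, tr(A_i A_j) = (1/d)·δ_{ij} for all i, j, and ∑_{i=1}^{d²} A_i = I. -/
open scoped ComplexOrder

/-!
Expanding `tr (G i) = ∑ⱼ tr (G i * G j)` and summing over `i` gives `tr (G i) = 1/d` and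
the constraint `d (a + (d² - 1) b) = 1`. The shift by `c = (1 - l)/d²` changes every pairwise trace
by `-2c/d + c² d = (l² - 1)/d³ = -b`, so after the shift distinct elements are trace-orthogonal and
each has squared norm `a - b = l²/d`, which the scaling by `l⁻¹` normalises to `1/d`.
-/

open Matrix Finset

section Affine

variable {ι n R : Type*} [Fintype ι] [DecidableEq n]

theorem trace_eq_of_sum_eq_one_of_trace_mul [Fintype n] [DecidableEq ι] [CommRing R]
    {G : ι → Matrix n n R} (hsum : ∑ i, G i = 1) {a b : R}
    (ha : ∀ i, (G i * G i).trace = a) (hb : ∀ i j, i ≠ j → (G i * G j).trace = b) (i : ι) :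
    (G i).trace = a + (Fintype.card ι - 1) * b := by
  have hpair : ∀ j, (G i * G j).trace = b + if i = j then a - b else 0 := by
    intro j
    split_ifs with hij
    · rw [← hij, ha]; ring
    · rw [hb i j hij, add_zero]
  calc (G i).trace = (G i * ∑ j, G j).trace := by rw [hsum, mul_one]
    _ = ∑ j, (b + if i = j then a - b else 0) := by
        simp only [Finset.mul_sum, trace_sum, hpair]
    _ = a + (Fintype.card ι - 1) * b := by
        rw [sum_add_distrib, sum_const, sum_ite_eq, if_pos (mem_univ i), card_univ, nsmul_eq_mul]
        ring

theorem card_mul_eq_card_of_sum_eq_one_of_trace_mul [Fintype n] [DecidableEq ι] [CommRing R]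
    {G : ι → Matrix n n R} (hsum : ∑ i, G i = 1) {a b : R}
    (ha : ∀ i, (G i * G i).trace = a) (hb : ∀ i j, i ≠ j → (G i * G j).trace = b) :
    Fintype.card ι * (a + (Fintype.card ι - 1) * b) = Fintype.card n := by
  have htrace : ∑ i, (G i).trace = Fintype.card n := by rw [← trace_sum, hsum, trace_one]
  simpa only [trace_eq_of_sum_eq_one_of_trace_mul hsum ha hb, sum_const, card_univ,
    nsmul_eq_mul] using htrace

theorem trace_smul_sub_smul_one_mul [Fintype n] [CommRing R] (X Y : Matrix n n R) (s c : R) :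
    ((s • (X - c • 1)) * (s • (Y - c • 1))).trace
      = s ^ 2 * ((X * Y).trace - c * X.trace - c * Y.trace + c ^ 2 * Fintype.card n) := by
  simp only [smul_mul, sub_mul, mul_sub, mul_one, one_mul, mul_smul_comm,
    trace_smul, trace_sub, trace_one, smul_eq_mul, smul_sub]
  ring

theorem sum_smul_sub_smul_one [Field R] {G : ι → Matrix n n R} (hsum : ∑ i, G i = 1)
    {s c : R} (hs : s ≠ 0) (hc : Fintype.card ι * c = 1 - s) :
    ∑ i, s⁻¹ • (G i - c • 1) = 1 := by
  rw [← smul_sum, sum_sub_distrib, hsum, sum_const, card_univ, ← Nat.cast_smul_eq_nsmul R,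
    smul_smul, hc, sub_smul, one_smul, sub_sub_cancel, smul_smul, inv_mul_cancel₀ hs, one_smul]

end Affine

theorem Matrix.IsHermitian.ofReal_smul_sub_ofReal_smul_one {n : Type*} [DecidableEq n]
    {G : Matrix n n ℂ} (hG : G.IsHermitian) (s c : ℝ) :
    ((s : ℂ) • (G - (c : ℂ) • 1)).IsHermitian :=
  (hG.sub (isHermitian_one.smul (Complex.conj_ofReal c))).smul (Complex.conj_ofReal s)

theorem one_sub_mul_pow_three_eq_div {d a b : ℝ} (hd : 1 < d)
    (h : d * (a + (d ^ 2 - 1) * b) = 1) :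
    1 - b * d ^ 3 = (d ^ 3 * a - 1) / (d ^ 2 - 1) := by
  rw [eq_div_iff (by nlinarith)]
  linear_combination (-d ^ 2) * h

theorem one_sub_mul_pow_three_pos {d a b : ℝ} (hd : 1 < d)
    (h : d * (a + (d ^ 2 - 1) * b) = 1) (ha : 1 / d ^ 3 < a) :
    0 < 1 - b * d ^ 3 := by
  rw [one_sub_mul_pow_three_eq_div hd h]
  rw [div_lt_iff₀ (by positivity)] at ha
  exact div_pos (by linarith) (by nlinarith)

/-- From any GSIC POVM `(G i)_{i=1}^{d²}` on `ℂ^d` with constants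
`a > 1/d³` and `b`, setting `λ := √(1 - b d³) = √((d³a - 1)/(d² - 1))`, the
matrices `A i := (1/λ)(G i - ((1-λ)/d²) I)` form a COB. -/
theorem gsic_to_cob (d : ℕ) (hd : 2 ≤ d)
    (G : Fin (d ^ 2) → Matrix (Fin d) (Fin d) ℂ)
    (hpsd : ∀ i, (G i).PosSemidef)
    (hsum : ∑ i, G i = 1)
    (a b : ℝ)
    (ha : ∀ i, (G i * G i).trace = (a : ℂ))
    (hb : ∀ i j, i ≠ j → (G i * G j).trace = (b : ℂ))
    (ha' : 1 / (d : ℝ) ^ 3 < a)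
    (l : ℝ) (hl : l = Real.sqrt (1 - b * d ^ 3))
    (A : Fin (d ^ 2) → Matrix (Fin d) (Fin d) ℂ)
    (hA : ∀ i, A i = ((l : ℂ))⁻¹ •
      (G i - (((1 - l) / d ^ 2 : ℝ) : ℂ) • (1 : Matrix (Fin d) (Fin d) ℂ))) :
    l = Real.sqrt (((d : ℝ) ^ 3 * a - 1) / ((d : ℝ) ^ 2 - 1)) ∧
    (∀ i, (A i).IsHermitian) ∧
    (∀ i j, (A i * A j).trace = if i = j then (1 / (d : ℂ)) else 0) ∧
    (∑ i, A i = 1) := by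
  have hd1 : (1 : ℝ) < d := by norm_cast
  have hd0 : (d : ℂ) ≠ 0 := by norm_cast; omega
  have hconstC : (d : ℂ) * (a + ((d : ℂ) ^ 2 - 1) * b) = 1 := by
    have h := card_mul_eq_card_of_sum_eq_one_of_trace_mul hsum ha hb
    simp only [Fintype.card_fin] at h
    push_cast at h
    exact mul_left_cancel₀ hd0 (by linear_combination h)
  have hconst : (d : ℝ) * (a + ((d : ℝ) ^ 2 - 1) * b) = 1 := by exact_mod_cast hconstC
  have hpos := one_sub_mul_pow_three_pos hd1 hconst ha'
  have hl2 : (l : ℂ) ^ 2 = 1 - b * d ^ 3 := by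
    rw [hl]; exact_mod_cast Real.sq_sqrt hpos.le
  have hl0 : (l : ℂ) ≠ 0 := by
    rw [hl]; exact_mod_cast (Real.sqrt_pos.mpr hpos).ne'
  have htr : ∀ i, (G i).trace = 1 / d := by
    intro i
    rw [trace_eq_of_sum_eq_one_of_trace_mul hsum ha hb, Fintype.card_fin, eq_div_iff hd0]
    push_cast
    linear_combination hconstC
  refine ⟨by rw [hl, one_sub_mul_pow_three_eq_div hd1 hconst], fun i => ?_, fun i j => ?_, ?_⟩
  · rw [hA, ← Complex.ofReal_inv]
    exact (hpsd i).isHermitian.ofReal_smul_sub_ofReal_smul_one _ _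
  · rw [hA, hA, trace_smul_sub_smul_one_mul, htr, htr, Fintype.card_fin]
    push_cast
    split_ifs with hij
    · rw [hij, ha]
      field_simp
      linear_combination (d : ℂ) ^ 2 * hconstC + (1 - (d : ℂ) ^ 2) * hl2
    · rw [hb i j hij]
      field_simp
      linear_combination hl2
  · simp only [hA]
    exact sum_smul_sub_smul_one hsum hl0 (by simp only [Fintype.card_fin]; push_cast; field_simp)
end

section
/- Let (A_i)_{i=1}^{4} be a COB on ℂ². Then the canonical construction with λ = 1/√3, namely G_i := (1/√3)·A_i + (1 − 1/√3)·I/4 (i = 1,…,4), yields a SIC POVM: each G_i is positive semidefinite of rank 1, ∑_{i=1}^{4} G_i = I, tr(G_i²) = 1/4 for every i, and tr(G_i G_j) = 1/12 for every i ≠ j. -/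
open scoped ComplexOrder

lemma keylem (a : Matrix (Fin 2) (Fin 2) ℂ) (c k : ℂ)
    (h1 : a.trace = 1/2) (h2 : (a * a).trace = 1/2)
    (hc : c^2 = 1/3) (hk : k = (1 - c)/4) :
    (c • a + k • 1) * (c • a + k • 1) = (1/2 : ℂ) • (c • a + k • 1) := by
  subst hk
  rw [Matrix.trace_fin_two] at h1
  rw [Matrix.trace_fin_two, Matrix.mul_apply, Matrix.mul_apply, Fin.sum_univ_two,
    Fin.sum_univ_two] at h2
  ext x y
  fin_cases x <;> fin_cases y <;>
    simp [Matrix.mul_apply, Fin.sum_univ_two, Matrix.one_apply] <;>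
    first
    | linear_combination c^2*(((a 0 0 - a 1 1)/2 - 1/4) * h1 + (1/2) * h2) + (3/16)*hc
    | linear_combination c^2*(((a 1 1 - a 0 0)/2 - 1/4) * h1 + (1/2) * h2) + (3/16)*hc
    | linear_combination c^2 * a 0 1 * h1
    | linear_combination c^2 * a 1 0 * h1

lemma detlem (g : Matrix (Fin 2) (Fin 2) ℂ)
    (h1 : g.trace = 1/2) (h2 : (g * g).trace = 1/4) : g.det = 0 := by
  rw [Matrix.trace_fin_two] at h1
  rw [Matrix.trace_fin_two, Matrix.mul_apply, Matrix.mul_apply, Fin.sum_univ_two,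
    Fin.sum_univ_two] at h2
  rw [Matrix.det_fin_two]
  linear_combination ((g 0 0 + g 1 1)/2 + 1/4) * h1 - (1/2) * h2

/-- For any COB `(A i)_{i=1}^4` on `ℂ²`, the canonical
construction with `λ = 1/√3`, i.e. `G i := (1/√3) • A i + ((1 - 1/√3)/4) • I`,
yields a SIC POVM: each `G i` is positive semidefinite of rank 1,
`∑ G i = I`, `tr (G i)² = 1/4`, and `tr (G i G j) = 1/12` for `i ≠ j`. -/
theorem cob_dim_two_canonical_is_sic
    (A : Fin 4 → Matrix (Fin 2) (Fin 2) ℂ)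
    (hherm : ∀ i, (A i).IsHermitian)
    (horth : ∀ i j, (A i * A j).trace = if i = j then (1 / 2 : ℂ) else 0)
    (hsum : ∑ i, A i = 1)
    (G : Fin 4 → Matrix (Fin 2) (Fin 2) ℂ)
    (hG : ∀ i, G i = ((1 / Real.sqrt 3 : ℝ) : ℂ) • A i +
      (((1 - 1 / Real.sqrt 3) / 4 : ℝ) : ℂ) • (1 : Matrix (Fin 2) (Fin 2) ℂ)) :
    (∀ i, (G i).PosSemidef) ∧
    (∀ i, (G i).rank = 1) ∧
    (∑ i, G i = 1) ∧
    (∀ i, (G i * G i).trace = (1 / 4 : ℂ)) ∧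
    (∀ i j, i ≠ j → (G i * G j).trace = (1 / 12 : ℂ)) := by
  set c : ℂ := ((1 / Real.sqrt 3 : ℝ) : ℂ) with hcdef
  set k : ℂ := (((1 - 1 / Real.sqrt 3) / 4 : ℝ) : ℂ) with hkdef
  have hc2 : c^2 = 1/3 := by
    have h : (1 / Real.sqrt 3 : ℝ)^2 = 1/3 := by
      rw [div_pow, one_pow, Real.sq_sqrt (by norm_num : (0:ℝ) ≤ 3)]
    rw [hcdef, ← Complex.ofReal_pow, h]
    norm_num
  have hk : k = (1 - c)/4 := by rw [hkdef, hcdef]; push_cast; ring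
  -- trace of A i
  have htr : ∀ i, (A i).trace = 1/2 := by
    intro i
    calc (A i).trace = (A i * ∑ j, A j).trace := by rw [hsum, mul_one]
      _ = ∑ j, (A i * A j).trace := by rw [Finset.mul_sum, Matrix.trace_sum]
      _ = 1/2 := by simp [horth]
  -- key identity
  have key : ∀ i, G i * G i = (1/2 : ℂ) • G i := by
    intro i
    rw [hG i]
    exact keylem (A i) c k (htr i) (by simpa using horth i i) hc2 hk
  -- G is Hermitian
  have hGherm : ∀ i, (G i).IsHermitian := by
    intro i
    rw [hG i]
    simp only [Matrix.IsHermitian, Matrix.conjTranspose_add, Matrix.conjTranspose_smul,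
      Matrix.conjTranspose_one, (hherm i).eq, Complex.star_def, hcdef, hkdef,
      Complex.conj_ofReal]
  -- traces of G
  have htrG : ∀ i, (G i).trace = 1/2 := by
    intro i
    rw [hG i, Matrix.trace_add, Matrix.trace_smul, Matrix.trace_smul, htr i, Matrix.trace_one]
    rw [hk]
    simp only [smul_eq_mul, Fintype.card_fin, Nat.cast_ofNat]
    ring
  have htrG2 : ∀ i, (G i * G i).trace = (1/4 : ℂ) := by
    intro i
    rw [key i, Matrix.trace_smul, htrG i, smul_eq_mul]
    norm_num
  refine ⟨?_, ?_, ?_, htrG2, ?_⟩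
  · -- PosSemidef
    intro i
    have h2 : ((Real.sqrt 2 : ℝ) : ℂ) * ((Real.sqrt 2 : ℝ) : ℂ) = 2 := by
      rw [← Complex.ofReal_mul, Real.mul_self_sqrt (by norm_num : (0:ℝ) ≤ 2)]
      norm_num
    have hBH : ((((Real.sqrt 2 : ℝ)) : ℂ) • G i).conjTranspose = ((Real.sqrt 2 : ℝ) : ℂ) • G i := by
      rw [Matrix.conjTranspose_smul, (hGherm i).eq, Complex.star_def, Complex.conj_ofReal]
    have hfin : ((((Real.sqrt 2 : ℝ)) : ℂ) • G i).conjTranspose * (((Real.sqrt 2 : ℝ) : ℂ) • G i)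
        = G i := by
      rw [hBH, Matrix.smul_mul, Matrix.mul_smul, key i, smul_smul, smul_smul]
      have hs : ((Real.sqrt 2 : ℝ) : ℂ) * ((Real.sqrt 2 : ℝ) : ℂ) * (1/2 : ℂ) = 1 := by
        rw [h2]; norm_num
      rw [hs, one_smul]
    rw [← hfin]
    exact Matrix.posSemidef_conjTranspose_mul_self _
  · -- rank
    intro i
    have hdet : (G i).det = 0 := detlem (G i) (htrG i) (htrG2 i)
    have hne : G i ≠ 0 := by
      intro h
      have := htrG i
      rw [h, Matrix.trace_zero] at this
      norm_num at this
    -- eigenvalues are 0 or 1/2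
    have heig : ∀ j, (hGherm i).eigenvalues j = 0 ∨ (hGherm i).eigenvalues j = 1/2 := by
      intro j
      have hv := (hGherm i).mulVec_eigenvectorBasis j
      set μ : ℝ := (hGherm i).eigenvalues j with hμ
      set v : Fin 2 → ℂ := ⇑((hGherm i).eigenvectorBasis j) with hvdef
      have hvne : v ≠ 0 := by
        intro h
        apply ((hGherm i).eigenvectorBasis.toBasis.ne_zero j)
        rw [OrthonormalBasis.coe_toBasis]
        ext x
        exact congrFun h x
      have hrsmul : ∀ (r : ℝ) (w : Fin 2 → ℂ), r • w = (r : ℂ) • w := by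
        intro r w; funext x; simp [Complex.real_smul]
      have e1 : (G i * G i).mulVec v = ((μ : ℂ)^2) • v := by
        rw [← Matrix.mulVec_mulVec, hv, hrsmul, Matrix.mulVec_smul, hv, hrsmul, smul_smul,
          ← pow_two]
      have e2 : (G i * G i).mulVec v = ((μ : ℂ)/2) • v := by
        rw [key i, Matrix.smul_mulVec, hv, hrsmul, smul_smul]
        congr 1
        ring
      have h0 : ((μ : ℂ)^2 - (μ : ℂ)/2) • v = 0 := by
        rw [sub_smul, ← e1, ← e2, sub_self]
      rcases smul_eq_zero.mp h0 with h | h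
      · have : (μ : ℂ) * ((μ : ℂ) - 1/2) = 0 := by linear_combination h
        rcases mul_eq_zero.mp this with h' | h'
        · left; exact Complex.ofReal_eq_zero.mp h'
        · right
          have h'' : ((μ : ℝ) : ℂ) = (((1:ℝ)/2 : ℝ) : ℂ) := by push_cast; linear_combination h'
          exact Complex.ofReal_injective h''
      · exact absurd h hvne
    -- some eigenvalue is zero
    have hzero : ∃ j, (hGherm i).eigenvalues j = 0 := by
      have := (hGherm i).det_eq_prod_eigenvalues
      rw [hdet] at this
      rcases Finset.prod_eq_zero_iff.mp this.symm with ⟨j, -, hj⟩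
      exact ⟨j, by simpa using hj⟩
    -- some eigenvalue is nonzero
    have hnonzero : ∃ j, (hGherm i).eigenvalues j ≠ 0 := by
      by_contra h
      push_neg at h
      apply hne
      have hall : (RCLike.ofReal ∘ (hGherm i).eigenvalues : Fin 2 → ℂ) = fun _ => 0 := by
        funext j; simp [h j]
      have := (hGherm i).spectral_theorem
      rw [hall] at this
      simpa [Matrix.diagonal_zero] using this
    obtain ⟨j₀, hj₀⟩ := hnonzero
    obtain ⟨jz, hjz⟩ := hzero
    rw [(hGherm i).rank_eq_card_non_zero_eigs]
    rw [Fintype.card_eq_one_iff]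
    refine ⟨⟨j₀, hj₀⟩, ?_⟩
    rintro ⟨j, hj⟩
    ext
    by_contra hne'
    have h1 : jz ≠ j := fun h => hj (h ▸ hjz)
    have h2 : jz ≠ j₀ := fun h => hj₀ (h ▸ hjz)
    have := j.isLt
    have := j₀.isLt
    have := jz.isLt
    simp only [ne_eq, Fin.ext_iff] at hne' h1 h2
    omega
  · -- sum
    rw [Finset.sum_congr rfl (fun i _ => hG i), Finset.sum_add_distrib, ← Finset.smul_sum, hsum,
      Finset.sum_const, Finset.card_univ, Fintype.card_fin,
      ← Nat.cast_smul_eq_nsmul ℂ, smul_smul, ← add_smul]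
    have hs : c + (4 : ℕ) * k = 1 := by rw [hk]; push_cast; ring
    rw [hs, one_smul]
  · -- cross traces
    intro i j hij
    simp only [hG i, hG j, Matrix.add_mul, Matrix.mul_add, Matrix.smul_mul, Matrix.mul_smul,
      mul_one, one_mul, Matrix.trace_add, Matrix.trace_smul, horth i j, if_neg hij, htr i,
      htr j, Matrix.trace_one, smul_eq_mul, Fintype.card_fin, Nat.cast_ofNat, mul_zero,
      smul_zero, add_zero, zero_add]
    rw [hk]
    linear_combination (-1/8 : ℂ) * hc2
end

section
/- Let d ≥ 2, let (A_i)_{i=1}^{d²} be a COB on ℂ^d, let m_i be the smallest eigenvalue of A_i, and set τ := max_i |m_i|. Then τ is the maximum, over all density matrices ρ on ℂ^d, of the quantity −min_{i} Re(tr(A_i ρ)); that is, −min_i Re(tr(A_i ρ)) ≤ τ for every density matrix ρ, and there exists a density matrix ρ (which can be taken to be a rank-1 projection) achieving equality. Equivalently, τ = (1/d)·N({A_i}), where N({A_i}) is Zhu's negativity of the quasiprobability representation determined by (A_i). -/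
/-!
Every eigenvalue of `A i` is at least `m i`, so `Re tr(A i ρ) ≥ m i` for every density matrix,
with equality at the projection onto a bottom eigenvector; hence the optimal value of
`-min_i Re tr(A i ρ)` is `-min_i m i`. It remains to see that `-min_i m i = max_i |m i|`, i.e. that
a positive `m i` is dominated by some `-m j`. Otherwise `A i - m i` and `A j + m i` (any `j ≠ i`)
are both positive semidefinite, yet by orthogonality and `tr A i = tr A j = 1/d` the trace of their
product is `-(m i)² d < 0`.
-/

open scoped ComplexOrder MatrixOrder

namespace Matrix

variable {n 𝕜 : Type*} [Fintype n] [RCLike 𝕜]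

theorem trace_mul_vecMulVec {α : Type*} [CommSemiring α] (M : Matrix n n α) (v w : n → α) :
    (M * vecMulVec v w).trace = w ⬝ᵥ (M *ᵥ v) := by
  rw [mul_vecMulVec, trace_vecMulVec, dotProduct_comm]

variable [DecidableEq n]

theorem trace_eq_of_sum_eq_one {ι R : Type*} [Fintype ι] [DecidableEq ι] [Semiring R]
    {A : ι → Matrix n n R} {c : R} (hsum : ∑ i, A i = 1)
    (horth : ∀ i j, (A i * A j).trace = if i = j then c else 0) (i : ι) :
    (A i).trace = c :=
  calc (A i).trace = (A i * ∑ j, A j).trace := by rw [hsum, Matrix.mul_one]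
    _ = ∑ j, (A i * A j).trace := by rw [Finset.mul_sum, trace_sum]
    _ = c := by simp [horth]

theorem rank_eq_zero_iff {K m : Type*} [Field K] {M : Matrix m n K} :
    M.rank = 0 ↔ M = 0 := by
  rw [rank, Submodule.finrank_eq_zero, LinearMap.range_eq_bot, ← toLin'_apply',
    LinearEquiv.map_eq_zero_iff]

theorem rank_vecMulVec_self_star {v : n → 𝕜} (hv : v ≠ 0) :
    (vecMulVec v (star v)).rank = 1 := by
  refine le_antisymm (rank_vecMulVec_le _ _) (Nat.one_le_iff_ne_zero.mpr ?_)
  rw [Ne, rank_eq_zero_iff]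
  exact vecMulVec_ne_zero hv (star_ne_zero.mpr hv)

theorem trace_mul_nonneg {B C : Matrix n n 𝕜} (hB : 0 ≤ B) (hC : 0 ≤ C) :
    0 ≤ (B * C).trace := by
  have hconj : 0 ≤ CFC.sqrt B * C * CFC.sqrt B :=
    (CFC.sqrt_nonneg B).isSelfAdjoint.conjugate_nonneg hC
  calc 0 ≤ (CFC.sqrt B * C * CFC.sqrt B).trace := (nonneg_iff_posSemidef.mp hconj).trace_nonneg
    _ = (B * C).trace := by rw [trace_mul_cycle, CFC.sqrt_mul_sqrt_self B hB]

theorem le_re_trace_mul_of_algebraMap_le {M ρ : Matrix n n 𝕜} {c : ℝ}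
    (hM : algebraMap ℝ _ c ≤ M) (hρ : ρ.PosSemidef) (hρ1 : ρ.trace = 1) :
    c ≤ RCLike.re (M * ρ).trace := by
  have h := RCLike.nonneg_iff.mp (trace_mul_nonneg (sub_nonneg.mpr hM) hρ.nonneg)
  rw [Algebra.algebraMap_eq_smul_one, Matrix.sub_mul, trace_sub, smul_mul_assoc, Matrix.one_mul,
    trace_smul, hρ1] at h
  simpa [RCLike.smul_re, sub_nonneg] using h.1

theorem eq_zero_of_algebraMap_le_of_algebraMap_neg_le [Nonempty n] {A B : Matrix n n 𝕜} {a : ℝ}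
    (hA : algebraMap ℝ _ a ≤ A) (hB : algebraMap ℝ _ (-a) ≤ B) (hAB : (A * B).trace = 0)
    (htr : A.trace = B.trace) : a = 0 := by
  have hprod := trace_mul_nonneg (sub_nonneg.mpr hA) (sub_nonneg.mpr hB)
  have hval : ((A - algebraMap ℝ _ a) * (B - algebraMap ℝ _ (-a))).trace
      = -((a ^ 2 * Fintype.card n : ℝ) : 𝕜) := by
    simp only [Algebra.algebraMap_eq_smul_one, Matrix.sub_mul, Matrix.mul_sub, smul_mul_assoc,
      mul_smul_comm, Matrix.one_mul, Matrix.mul_one, trace_sub, trace_smul, trace_one, hAB, htr]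
    simp only [RCLike.real_smul_eq_coe_mul]
    push_cast
    ring
  rw [hval, neg_nonneg, ← RCLike.ofReal_zero, RCLike.ofReal_le_ofReal] at hprod
  have hcard : (0 : ℝ) < Fintype.card n := by exact_mod_cast Fintype.card_pos
  exact pow_eq_zero_iff two_ne_zero |>.mp (le_antisymm (by nlinarith) (sq_nonneg a))

namespace IsHermitian

variable {M : Matrix n n 𝕜}

theorem algebraMap_le_iff (hM : M.IsHermitian) {c : ℝ} :
    algebraMap ℝ _ c ≤ M ↔ ∀ k, c ≤ hM.eigenvalues k := by
  rw [algebraMap_le_iff_le_spectrum hM.isSelfAdjoint, hM.spectrum_real_eq_range_eigenvalues,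
    Set.forall_mem_range]

theorem algebraMap_iInf_eigenvalues_le (hM : M.IsHermitian) :
    algebraMap ℝ _ (⨅ k, hM.eigenvalues k) ≤ M :=
  hM.algebraMap_le_iff.mpr fun k => ciInf_le (Finite.bddBelow_range _) k

theorem exists_rank_one_density_trace_mul_eq (hM : M.IsHermitian) (k : n) :
    ∃ ρ : Matrix n n 𝕜, ρ.PosSemidef ∧ ρ.trace = 1 ∧ ρ.rank = 1 ∧
      (M * ρ).trace = hM.eigenvalues k := by
  set v : n → 𝕜 := ⇑(hM.eigenvectorBasis k)
  have hv : v ⬝ᵥ star v = 1 := by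
    rw [← EuclideanSpace.inner_eq_star_dotProduct, inner_self_eq_norm_sq_to_K,
      hM.eigenvectorBasis.orthonormal.1 k, RCLike.ofReal_one, one_pow]
  have hv0 : v ≠ 0 := by
    rintro h
    simp [h] at hv
  refine ⟨vecMulVec v (star v), posSemidef_vecMulVec_self_star v, by rw [trace_vecMulVec, hv],
    rank_vecMulVec_self_star hv0, ?_⟩
  rw [trace_mul_vecMulVec, hM.mulVec_eigenvectorBasis, dotProduct_smul, dotProduct_comm, hv,
    RCLike.real_smul_eq_coe_mul, mul_one]

end IsHermitian

end Matrix

theorem ciSup_abs_eq_neg_ciInf {ι : Type*} [Finite ι] [Nonempty ι] {f : ι → ℝ}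
    (h : ∀ i, 0 < f i → ∃ j, f j ≤ -f i) : ⨆ i, |f i| = -⨅ i, f i := by
  have hle : ∀ i, (⨅ i, f i) ≤ f i := ciInf_le (Finite.bddBelow_range f)
  obtain ⟨i₀, hi₀⟩ := exists_eq_ciInf_of_finite (f := f)
  refine le_antisymm (ciSup_le fun i => abs_le.mpr ⟨by linarith [hle i], ?_⟩) ?_
  · rcases le_or_gt (f i) 0 with hi | hi
    · linarith [hle i]
    · obtain ⟨j, hj⟩ := h i hi
      linarith [hle j]
  · rw [← hi₀]
    exact le_ciSup_of_le (Finite.bddAbove_range _) i₀ (neg_le_abs _)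

open Matrix

variable {n ι 𝕜 : Type*} [Fintype n] [DecidableEq n] [RCLike 𝕜]

theorem iInf_le_iInf_re_trace_mul [Finite ι] [Nonempty ι] {A : ι → Matrix n n 𝕜}
    (hA : ∀ i, (A i).IsHermitian) {m : ι → ℝ} (hm : ∀ i, m i = ⨅ k, (hA i).eigenvalues k)
    {ρ : Matrix n n 𝕜} (hρ : ρ.PosSemidef) (hρ1 : ρ.trace = 1) :
    ⨅ i, m i ≤ ⨅ i, RCLike.re (A i * ρ).trace :=
  le_ciInf fun i => le_re_trace_mul_of_algebraMap_le
    ((hA i).algebraMap_le_iff.mpr fun k => (ciInf_le (Finite.bddBelow_range m) i).trans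
      (hm i ▸ ciInf_le (Finite.bddBelow_range _) k)) hρ hρ1

theorem exists_rank_one_iInf_re_trace_mul_eq [Finite ι] [Nonempty ι] [Nonempty n]
    {A : ι → Matrix n n 𝕜} (hA : ∀ i, (A i).IsHermitian) {m : ι → ℝ}
    (hm : ∀ i, m i = ⨅ k, (hA i).eigenvalues k) :
    ∃ ρ : Matrix n n 𝕜, ρ.PosSemidef ∧ ρ.trace = 1 ∧ ρ.rank = 1 ∧
      ⨅ i, RCLike.re (A i * ρ).trace = ⨅ i, m i := by
  obtain ⟨i₀, hi₀⟩ := exists_eq_ciInf_of_finite (f := m)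
  obtain ⟨k₀, hk₀⟩ := exists_eq_ciInf_of_finite (f := (hA i₀).eigenvalues)
  obtain ⟨ρ, hρ, hρ1, hrank, htr⟩ := (hA i₀).exists_rank_one_density_trace_mul_eq k₀
  refine ⟨ρ, hρ, hρ1, hrank, le_antisymm ?_ (iInf_le_iInf_re_trace_mul hA hm hρ hρ1)⟩
  refine ciInf_le_of_le (Finite.bddBelow_range _) i₀ ?_
  rw [htr, RCLike.ofReal_re, hk₀, ← hm, hi₀]

theorem exists_le_neg_of_pos [Fintype ι] [DecidableEq ι] [Nontrivial ι] [Nonempty n]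
    {A : ι → Matrix n n 𝕜} (hA : ∀ i, (A i).IsHermitian) {c : 𝕜}
    (horth : ∀ i j, (A i * A j).trace = if i = j then c else 0) (hsum : ∑ i, A i = 1)
    {m : ι → ℝ} (hm : ∀ i, m i = ⨅ k, (hA i).eigenvalues k) (i : ι) (hi : 0 < m i) :
    ∃ j, m j ≤ -m i := by
  by_contra! hlt
  obtain ⟨j, hji⟩ := exists_ne i
  have hAi : algebraMap ℝ _ (m i) ≤ A i := hm i ▸ (hA i).algebraMap_iInf_eigenvalues_le
  have hAj : algebraMap ℝ _ (-m i) ≤ A j := (hA j).algebraMap_le_iff.mpr fun k =>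
    (hlt j).le.trans (hm j ▸ ciInf_le (Finite.bddBelow_range _) k)
  have hAij : (A i * A j).trace = 0 := by rw [horth, if_neg hji.symm]
  have htr := trace_eq_of_sum_eq_one hsum horth
  exact hi.ne' (eq_zero_of_algebraMap_le_of_algebraMap_neg_le hAi hAj hAij
    ((htr i).trans (htr j).symm))

/-- For a COB `(A i)` on `ℂ^d` with smallest eigenvalues `m i`
and `τ := max_i |m i|`, the quantity `-min_i Re tr(A i ρ)` is at most `τ` for
every density matrix `ρ`, equality is attained at some rank-1 density matrix,
and `τ = (1/d) N({A i})` where `N` is Zhu's negativity. -/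
theorem cob_tau_eq_negativity (d : ℕ) (hd : 2 ≤ d)
    (A : Fin (d ^ 2) → Matrix (Fin d) (Fin d) ℂ)
    (hherm : ∀ i, (A i).IsHermitian)
    (horth : ∀ i j, (A i * A j).trace = if i = j then (1 / (d : ℂ)) else 0)
    (hsum : ∑ i, A i = 1)
    (m : Fin (d ^ 2) → ℝ) (hm : ∀ i, m i = ⨅ k, (hherm i).eigenvalues k)
    (τ : ℝ) (hτ : τ = ⨆ i, |m i|)
    (N : ℝ)
    (hN : N = sSup {x : ℝ | ∃ ρ : Matrix (Fin d) (Fin d) ℂ,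
      ρ.PosSemidef ∧ ρ.trace = 1 ∧
      x = d * max 0 (-(⨅ i, ((A i * ρ).trace).re))}) :
    (∀ ρ : Matrix (Fin d) (Fin d) ℂ, ρ.PosSemidef → ρ.trace = 1 →
      -(⨅ i, ((A i * ρ).trace).re) ≤ τ) ∧
    (∃ ρ : Matrix (Fin d) (Fin d) ℂ, ρ.PosSemidef ∧ ρ.trace = 1 ∧
      ρ.rank = 1 ∧ -(⨅ i, ((A i * ρ).trace).re) = τ) ∧
    τ = (1 / d) * N := by
  have hd0 : d ≠ 0 := by omega
  have : Nonempty (Fin d) := ⟨⟨0, by omega⟩⟩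
  have : Nontrivial (Fin (d ^ 2)) := Fin.nontrivial_iff_two_le.mpr (by nlinarith)
  have hτm : τ = -⨅ i, m i :=
    hτ ▸ ciSup_abs_eq_neg_ciInf (exists_le_neg_of_pos hherm horth hsum hm)
  have hτ0 : 0 ≤ τ := hτ ▸ Real.iSup_nonneg fun i => abs_nonneg _
  have hbound : ∀ ρ : Matrix (Fin d) (Fin d) ℂ, ρ.PosSemidef → ρ.trace = 1 →
      -(⨅ i, ((A i * ρ).trace).re) ≤ τ := fun ρ hρ hρ1 =>
    hτm ▸ neg_le_neg (iInf_le_iInf_re_trace_mul hherm hm hρ hρ1)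
  obtain ⟨ρ₀, hρ₀, hρ₀1, hrank, hval⟩ := exists_rank_one_iInf_re_trace_mul_eq hherm hm
  have hval' : -(⨅ i, ((A i * ρ₀).trace).re) = τ := by rw [hτm, ← hval]; rfl
  refine ⟨hbound, ⟨ρ₀, hρ₀, hρ₀1, hrank, hval'⟩, ?_⟩
  have hNτ : N = d * τ := hN ▸ IsGreatest.csSup_eq
    ⟨⟨ρ₀, hρ₀, hρ₀1, by rw [hval', max_eq_right hτ0]⟩, by
      rintro _ ⟨ρ, hρ, hρ1, rfl⟩
      exact mul_le_mul_of_nonneg_left (max_le hτ0 (hbound ρ hρ hρ1)) (Nat.cast_nonneg d)⟩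
  rw [hNτ]
  field_simp
end

section
/- Let K be a real inner product space, D ≥ 2, and let ι ∈ K be a nonzero vector. Let (t_i)_{i=0}^{D−1} be an orthonormal family in K with t_0 = ι/‖ι‖. For 1 ≤ j ≤ D−1 set f(j) := √D/√((D−j)(D−(j−1))), and define φ_0 := (‖ι‖/D)·(t_0 − ∑_{j=1}^{D−1} f(j)·t_j) and, for 1 ≤ i ≤ D−1, φ_i := (‖ι‖/D)·(t_0 − ∑_{j=1}^{i−1} f(j)·t_j + (D−i)·f(i)·t_i). Then ⟨φ_i, φ_j⟩ = (‖ι‖²/D)·δ_{ij} for all i, j, and ∑_{i=0}^{D−1} φ_i = ι. -/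
/-!
Write `ψ m = t 0 - ∑_{1 ≤ j < m} f j • t j` (`partialVec`) and `g m = ψ m + (D - m) f m • t m`
(`constructionVec`). Then `φ i = (‖ι‖/D) g i` for `1 ≤ i < D`, and `φ 0 = (‖ι‖/D) g D`, since the
last term of `g D` has coefficient `D - D = 0`.
The vector `ψ m` is orthogonal to `t j` for `j ≥ m`, and `‖ψ m‖² = 1 + ∑_{1 ≤ j < m} f j²`.
The weights `f` are chosen exactly so that `‖ψ m‖² = D / (D - m + 1) = (D - m) f m²`; this makes
`g m` orthogonal to `ψ (m + 1) = ψ m - f m • t m`, hence to every later `g n`, and gives it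
squared norm `D`. The sum telescopes: raising `D` by one adds `∑ f m • t m` to `∑ g m`, which
cancels against the new last vector `ψ (D + 1)`.
-/

open scoped RealInnerProductSpace

open Finset

section Module

variable {R M : Type*} [Ring R] [AddCommGroup M] [Module R M] (t : ℕ → M) (f : ℕ → R)

noncomputable def partialVec (m : ℕ) : M := t 0 - ∑ j ∈ Ico 1 m, f j • t j

noncomputable def constructionVec (D m : ℕ) : M := partialVec t f m + (((D : R) - m) * f m) • t m

lemma partialVec_one : partialVec t f 1 = t 0 := by
  simp [partialVec]

lemma partialVec_eq_sub_sum_Ico {m n : ℕ} (hm : 1 ≤ m) (hmn : m ≤ n) :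
    partialVec t f n = partialVec t f m - ∑ j ∈ Ico m n, f j • t j := by
  rw [partialVec, partialVec, ← sum_Ico_consecutive _ hm hmn, sub_add_eq_sub_sub]

lemma partialVec_succ {m : ℕ} (hm : 1 ≤ m) :
    partialVec t f (m + 1) = partialVec t f m - f m • t m := by
  simp [partialVec_eq_sub_sum_Ico t f hm m.le_succ]

lemma constructionVec_self (D : ℕ) : constructionVec t f D D = partialVec t f D := by
  simp [constructionVec]

lemma sum_Ico_constructionVec (N : ℕ) :
    ∑ m ∈ Ico 1 (N + 1), constructionVec t f N m = (N : R) • t 0 := by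
  induction N with
  | zero => simp
  | succ N ih =>
    have hstep : ∀ m, constructionVec t f (N + 1) m = constructionVec t f N m + f m • t m := by
      intro m
      rw [constructionVec, constructionVec, add_assoc, ← add_smul, Nat.cast_succ,
        add_sub_right_comm, add_one_mul]
    rw [sum_Ico_succ_top (by omega), constructionVec_self, sum_congr rfl fun m _ => hstep m,
      sum_add_distrib, ih, partialVec]
    push_cast
    rw [add_smul, one_smul]
    abel

lemma sum_range_constructionVec_ite {D : ℕ} (hD : 0 < D) :
    ∑ i ∈ range D, constructionVec t f D (if i = 0 then D else i) = (D : R) • t 0 := by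
  rw [sum_range_eq_add_Ico _ hD, ← sum_Ico_constructionVec t f D, sum_Ico_succ_top (by omega),
    add_comm]
  congr 1
  exact sum_congr rfl fun i hi => by simp [Nat.one_le_iff_ne_zero.1 (mem_Ico.1 hi).1]

end Module

lemma mul_sq_eq_of_eq_sqrt_div_sqrt {a b x : ℝ} (ha : 0 ≤ a) (hb : 0 < b) (hx : x = √a / √b) :
    b * x ^ 2 = a := by
  rw [hx, div_pow, Real.sq_sqrt ha, Real.sq_sqrt hb.le, mul_div_cancel₀ _ hb.ne']

section InnerProduct

variable {K : Type*} [NormedAddCommGroup K] [InnerProductSpace ℝ K] {D : ℕ} {t : ℕ → K}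
  (f : ℕ → ℝ)

lemma inner_partialVec_eq_of_forall_inner_eq_zero {x : K} {m n : ℕ} (hm : 1 ≤ m) (hmn : m ≤ n)
    (hx : ∀ j ∈ Ico m n, ⟪x, t j⟫ = 0) : ⟪x, partialVec t f n⟫ = ⟪x, partialVec t f m⟫ := by
  rw [partialVec_eq_sub_sum_Ico t f hm hmn, inner_sub_right, inner_sum,
    sum_eq_zero fun j hj => by rw [real_inner_smul_right, hx j hj, mul_zero], sub_zero]

variable (ht : ∀ i < D, ∀ j < D, ⟪t i, t j⟫ = if i = j then 1 else 0)
include ht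

lemma inner_partialVec_eq_zero {j m : ℕ} (hm : 1 ≤ m) (hmj : m ≤ j) (hjD : j < D) :
    ⟪t j, partialVec t f m⟫ = 0 := by
  rw [inner_partialVec_eq_of_forall_inner_eq_zero f le_rfl hm, partialVec_one,
    ht j hjD 0 (by omega), if_neg (by omega)]
  intro k hk
  rw [mem_Ico] at hk
  rw [ht j hjD k (by omega), if_neg (by omega)]

lemma norm_partialVec_sq {m : ℕ} (hm : 1 ≤ m) (hmD : m ≤ D) :
    ‖partialVec t f m‖ ^ 2 = 1 + ∑ j ∈ Ico 1 m, f j ^ 2 := by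
  induction m, hm using Nat.le_induction with
  | base => rw [partialVec_one, ← real_inner_self_eq_norm_sq, ht 0 hmD 0 hmD]; simp
  | succ m hm ih =>
    have hm_perp : ⟪partialVec t f m, t m⟫ = 0 := by
      rw [real_inner_comm, inner_partialVec_eq_zero f ht hm le_rfl (by omega)]
    rw [partialVec_succ t f hm, norm_sub_sq_real, real_inner_smul_right, hm_perp, norm_smul,
      mul_pow, ← real_inner_self_eq_norm_sq (t m), ht m (by omega) m (by omega),
      ih (by omega), sum_Ico_succ_top hm, Real.norm_eq_abs, sq_abs]
    simp [add_assoc]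

variable {f}
variable (hf : ∀ j, 1 ≤ j → j < D → ((D : ℝ) - j) * (D - j + 1) * f j ^ 2 = D)
include hf

omit ht in
lemma one_add_sum_sq_eq {m : ℕ} (hm : 1 ≤ m) (hmD : m ≤ D) :
    1 + ∑ j ∈ Ico 1 m, f j ^ 2 = D / ((D : ℝ) - m + 1) := by
  induction m, hm using Nat.le_induction with
  | base =>
    have : (D : ℝ) ≠ 0 := by positivity
    simp [this]
  | succ m hm ih =>
    have hmD' : (m : ℝ) + 1 ≤ D := by exact_mod_cast hmD
    have h1 : (D : ℝ) - m ≠ 0 := by linarith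
    have h2 : (D : ℝ) - m + 1 ≠ 0 := by linarith
    rw [sum_Ico_succ_top hm, ← add_assoc, ih (by omega), Nat.cast_succ,
      show (D : ℝ) - (m + 1) + 1 = D - m by ring, div_add' _ _ _ h2, div_eq_div_iff h2 h1]
    linear_combination hf m hm (by omega)

omit ht in
lemma sub_mul_sq_eq_one_add_sum_sq {m : ℕ} (hm : 1 ≤ m) (hmD : m < D) :
    ((D : ℝ) - m) * f m ^ 2 = 1 + ∑ j ∈ Ico 1 m, f j ^ 2 := by
  have hmD' : (m : ℝ) + 1 ≤ D := by exact_mod_cast hmD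
  have h1 : (D : ℝ) - m ≠ 0 := by linarith
  rw [one_add_sum_sq_eq hf hm hmD.le, eq_div_iff (by linarith)]
  linear_combination hf m hm hmD

lemma norm_constructionVec_sq {m : ℕ} (hm : 1 ≤ m) (hmD : m ≤ D) :
    ‖constructionVec t f D m‖ ^ 2 = D := by
  rcases hmD.eq_or_lt with rfl | hmD
  · rw [constructionVec_self, norm_partialVec_sq f ht hm le_rfl, one_add_sum_sq_eq hf hm le_rfl]
    simp
  have hm_perp : ⟪partialVec t f m, t m⟫ = 0 := by
    rw [real_inner_comm, inner_partialVec_eq_zero f ht hm le_rfl hmD]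
  have hmD' : (m : ℝ) + 1 ≤ D := by exact_mod_cast hmD
  rw [constructionVec, norm_add_sq_real, real_inner_smul_right, hm_perp, norm_smul, mul_pow,
    ← real_inner_self_eq_norm_sq (t m), ht m hmD m hmD, norm_partialVec_sq f ht hm hmD.le,
    Real.norm_eq_abs, sq_abs, ← sub_mul_sq_eq_one_add_sum_sq hf hm hmD, if_pos rfl]
  linear_combination hf m hm hmD

lemma inner_constructionVec_eq_zero_of_lt {m n : ℕ} (hm : 1 ≤ m) (hmn : m < n) (hnD : n ≤ D) :
    ⟪constructionVec t f D m, constructionVec t f D n⟫ = 0 := by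
  have hperp : ∀ j, m < j → j < D → ⟪constructionVec t f D m, t j⟫ = 0 := by
    intro j hmj hjD
    rw [constructionVec, inner_add_left, real_inner_comm,
      inner_partialVec_eq_zero f ht hm hmj.le hjD, real_inner_smul_left, ht m (by omega) j hjD, if_neg hmj.ne]
    simp
  have hψ_perp : ⟪constructionVec t f D m, partialVec t f n⟫ = 0 := by
    rw [inner_partialVec_eq_of_forall_inner_eq_zero f (by omega) hmn
      fun j hj => hperp j (mem_Ico.1 hj).1 ((mem_Ico.1 hj).2.trans_le hnD)]
    have hmD : m < D := by omega
    have hm_perp : ⟪t m, partialVec t f m⟫ = 0 := inner_partialVec_eq_zero f ht hm le_rfl hmD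
    rw [constructionVec, partialVec_succ t f hm, inner_add_left, inner_sub_right, inner_sub_right,
      real_inner_smul_right, real_inner_smul_left, real_inner_smul_left, real_inner_smul_right,
      real_inner_comm (t m), hm_perp, real_inner_self_eq_norm_sq,
      norm_partialVec_sq f ht hm hmD.le, ht m hmD m hmD, if_pos rfl,
      ← sub_mul_sq_eq_one_add_sum_sq hf hm hmD]
    ring
  nth_rw 2 [constructionVec]
  rw [inner_add_right, hψ_perp, real_inner_smul_right]
  rcases hnD.eq_or_lt with rfl | hnD
  · simp
  · rw [hperp n hmn hnD, mul_zero, add_zero]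

lemma inner_constructionVec {m n : ℕ} (hm : m ∈ Icc 1 D) (hn : n ∈ Icc 1 D) :
    ⟪constructionVec t f D m, constructionVec t f D n⟫ = if m = n then (D : ℝ) else 0 := by
  rw [mem_Icc] at hm hn
  rcases lt_trichotomy m n with hmn | rfl | hmn
  · rw [inner_constructionVec_eq_zero_of_lt ht hf hm.1 hmn hn.2, if_neg hmn.ne]
  · rw [real_inner_self_eq_norm_sq, norm_constructionVec_sq ht hf hm.1 hm.2, if_pos rfl]
  · rw [real_inner_comm, inner_constructionVec_eq_zero_of_lt ht hf hn.1 hmn hm.2, if_neg hmn.ne']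

end InnerProduct

/-- Construction 2, explicit form: Given vectors `t 0, …, t (D-1)`
orthonormal with `t 0 = ι/‖ι‖`, the explicitly defined vectors
`φ 0 = (‖ι‖/D)(t 0 - ∑_{j=1}^{D-1} f j • t j)` and
`φ i = (‖ι‖/D)(t 0 - ∑_{j=1}^{i-1} f j • t j + (D-i) f i • t i)` for
`1 ≤ i ≤ D-1`, where `f j = √D/√((D-j)(D-(j-1)))`, satisfy
`⟪φ i, φ j⟫ = (‖ι‖²/D) δ_{ij}` and `∑_{i<D} φ i = ι`. -/
theorem orthogonal_basis_with_fixed_sum_construction_two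
    (K : Type*) [NormedAddCommGroup K] [InnerProductSpace ℝ K]
    (D : ℕ) (hD : 2 ≤ D) (ι : K) (hι : ι ≠ 0)
    (t : ℕ → K)
    (ht : ∀ i < D, ∀ j < D, ⟪t i, t j⟫ = if i = j then 1 else 0)
    (ht0 : t 0 = ‖ι‖⁻¹ • ι)
    (f : ℕ → ℝ)
    (hf : ∀ j, 1 ≤ j → j ≤ D - 1 →
      f j = Real.sqrt D / Real.sqrt (((D : ℝ) - j) * ((D : ℝ) - ((j : ℝ) - 1))))
    (φ : ℕ → K)
    (hφ0 : φ 0 = (‖ι‖ / D) • (t 0 - ∑ j ∈ Finset.Ico 1 D, f j • t j))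
    (hφ : ∀ i, 1 ≤ i → i ≤ D - 1 →
      φ i = (‖ι‖ / D) •
        (t 0 - ∑ j ∈ Finset.Ico 1 i, f j • t j + (((D : ℝ) - i) * f i) • t i)) :
    (∀ i < D, ∀ j < D, ⟪φ i, φ j⟫ = if i = j then ‖ι‖ ^ 2 / D else 0) ∧
    (∑ i ∈ Finset.range D, φ i = ι) := by
  have hD0 : 0 < D := by omega
  have hf' : ∀ j, 1 ≤ j → j < D → ((D : ℝ) - j) * (D - j + 1) * f j ^ 2 = D := by
    intro j hj hjD
    have hjD' : (j : ℝ) + 1 ≤ D := by exact_mod_cast hjD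
    rw [show (D : ℝ) - j + 1 = D - (j - 1) by ring]
    exact mul_sq_eq_of_eq_sqrt_div_sqrt D.cast_nonneg (by nlinarith) (hf j hj (by omega))
  let σ : ℕ → ℕ := fun i => if i = 0 then D else i
  have hσ_mem : ∀ i < D, σ i ∈ Icc 1 D := fun i hi => by
    simp only [σ, mem_Icc]; split_ifs <;> omega
  have hφσ : ∀ i < D, φ i = (‖ι‖ / D) • constructionVec t f D (σ i) := by
    intro i hi
    by_cases hi0 : i = 0
    · simp [σ, hi0, hφ0, constructionVec_self, partialVec]
    · simp [σ, hi0, hφ i (by omega) (by omega), constructionVec, partialVec]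
  constructor
  · intro i hi j hj
    have hσ_inj : σ i = σ j ↔ i = j := by simp only [σ]; split_ifs <;> omega
    rw [hφσ i hi, hφσ j hj, real_inner_smul_left, real_inner_smul_right,
      inner_constructionVec ht hf' (hσ_mem i hi) (hσ_mem j hj)]
    simp only [hσ_inj]
    split_ifs
    · field_simp
    · simp
  · rw [sum_congr rfl fun i hi => hφσ i (mem_range.1 hi), ← smul_sum,
      sum_range_constructionVec_ite t f hD0, ht0, smul_smul, smul_smul,
      div_mul_cancel₀ _ (by positivity), mul_inv_cancel₀ (norm_ne_zero_iff.2 hι), one_smul]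
end

section
/- Let d ≥ 2. Let (e_{J,i}) for J = 1,…,d+1 and i = 1,…,d be a complete set of mutually unbiased bases of ℂ^d: for each J, (e_{J,i})_{i=1}^d is an orthonormal basis of ℂ^d, and |⟨e_{J,i}, e_{J',i'}⟩|² = 1/d whenever J ≠ J'. Let (L_i^{(J)}) for J = 1,…,d+1 and i = 1,…,d be a complete set of mutually unbiased striations of {1,…,d²}: for each J, (L_i^{(J)})_{i=1}^d is a partition of {1,…,d²} into d sets of cardinality d, and #(L_i^{(J)} ∩ L_{i'}^{(J')}) = 1 whenever J ≠ J'. For each k ∈ {1,…,d²} and each J, let s(k,J) be the unique i with k ∈ L_i^{(J)}. Define A_k := (1/d)·( ∑_{J=1}^{d+1} |e_{J,s(k,J)}⟩⟨e_{J,s(k,J)}| − I ). Then (A_k)_{k=1}^{d²} is a COB on ℂ^d: each A_k is Hermitian, tr(A_k A_{k'}) = (1/d)·δ_{kk'} for all k, k', and ∑_{k=1}^{d²} A_k = I. -/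
/-!
Write `P k = ∑ J, |e J (s k J)⟩⟨e J (s k J)|`, so that `A k = (P k - 1) / d`. Orthonormality and
unbiasedness give `tr (P k * P k') = c k k' + (d + 1)` and `tr (P k) = d + 1`, where `c k k'` counts
the striations in which `k` and `k'` lie in a common block; hence `tr (A k * A k') = (c k k' - 1) / d²`.
Blocks of different striations meet in at most one point, so the `d + 1` blocks through `k`,
punctured at `k`, are disjoint; having `(d + 1)(d - 1) = d² - 1` points in total they cover every
`k' ≠ k` exactly once, i.e. `c k k' = 1`, while `c k k = d + 1`. Finally each striation contributes
`d • 1` to `∑ k, P k`, since its blocks have `d` points and each basis resolves the identity, so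
`∑ k, A k = ((d + 1) d - d²) / d • 1 = 1`.
-/

open scoped InnerProductSpace
open Matrix Finset

section KetBra

variable {𝕜 ι : Type*} [RCLike 𝕜]

def ketBra (v : EuclideanSpace 𝕜 ι) : Matrix ι ι 𝕜 :=
  vecMulVec v (fun a => starRingEnd 𝕜 (v a))

theorem isHermitian_ketBra (v : EuclideanSpace 𝕜 ι) : (ketBra v).IsHermitian := by
  rw [IsHermitian, ketBra, conjTranspose_vecMulVec]
  congr 1
  ext a
  simp

variable [Fintype ι]

theorem trace_ketBra (v : EuclideanSpace 𝕜 ι) : (ketBra v).trace = (‖v‖ : 𝕜) ^ 2 := by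
  rw [ketBra, trace_vecMulVec, ← inner_self_eq_norm_sq_to_K]
  rfl

theorem trace_ketBra_mul_ketBra (u v : EuclideanSpace 𝕜 ι) :
    (ketBra u * ketBra v).trace = (‖⟪u, v⟫_𝕜‖ : 𝕜) ^ 2 := by
  have huv : (fun a => starRingEnd 𝕜 (u a)) ⬝ᵥ v = ⟪u, v⟫_𝕜 := dotProduct_comm _ _
  have hvu : u ⬝ᵥ (fun a => starRingEnd 𝕜 (v a)) = starRingEnd 𝕜 ⟪u, v⟫_𝕜 := by
    rw [inner_conj_symm]; rfl
  rw [ketBra, ketBra, vecMulVec_mul_vecMulVec, trace_vecMulVec, dotProduct_smul, smul_eq_mul, huv,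
    hvu, RCLike.mul_conj]

theorem sum_ketBra_eq_one [DecidableEq ι] {e : ι → EuclideanSpace 𝕜 ι} (he : Orthonormal 𝕜 e) :
    ∑ i, ketBra (e i) = 1 := by
  set U : Matrix ι ι 𝕜 := of fun a i => e i a
  have hU : Uᴴ * U = 1 := by
    ext i j
    simpa [U, mul_apply, one_apply, PiLp.inner_apply, mul_comm] using orthonormal_iff_ite.mp he i j
  rw [← mul_eq_one_comm.mp hU]
  ext a b
  simp [U, ketBra, mul_apply, vecMulVec_apply, Matrix.sum_apply]

theorem sum_ketBra_comp_eq_smul_one [DecidableEq ι] {α : Type*} [Fintype α]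
    {e : ι → EuclideanSpace 𝕜 ι} (he : Orthonormal 𝕜 e) {f : α → ι} {m : ℕ}
    (hf : ∀ i, #{k | f k = i} = m) :
    ∑ k, ketBra (e (f k)) = m • 1 := by
  rw [← sum_fiberwise univ f, ← sum_ketBra_eq_one he, smul_sum]
  refine sum_congr rfl fun i _ => ?_
  rw [sum_congr rfl fun k hk => by rw [(mem_filter.1 hk).2], sum_const, hf]

end KetBra

theorem trace_smul_sub_one_mul_smul_sub_one {n R : Type*} [Fintype n] [DecidableEq n] [CommRing R]
    (c : R) (P Q : Matrix n n R) :
    (c • (P - 1) * c • (Q - 1)).trace =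
      c ^ 2 * ((P * Q).trace - P.trace - Q.trace + Fintype.card n) := by
  simp only [smul_mul_smul, mul_sub, sub_mul, mul_one, one_mul, trace_smul, trace_sub, trace_one,
    smul_eq_mul]
  ring

section Striation

variable {α ι κ : Type*} [DecidableEq α] {L : ι → κ → Finset α} {s : α → ι → κ}

theorem eq_of_apply_eq_of_apply_eq (hmem : ∀ k J i, k ∈ L J i ↔ s k J = i)
    (hmus : ∀ J J' i i', J ≠ J' → #(L J i ∩ L J' i') ≤ 1) {k k' : α} (hk : k ≠ k') {J J' : ι}
    (hJ : s k J = s k' J) (hJ' : s k J' = s k' J') : J = J' := by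
  by_contra hne
  refine hk (card_le_one.1 (hmus J J' (s k J) (s k J') hne) k ?_ k' ?_) <;>
    simp only [mem_inter, hmem, hJ, hJ', and_self]

theorem pairwiseDisjoint_blocks_erase (hmem : ∀ k J i, k ∈ L J i ↔ s k J = i)
    (hmus : ∀ J J' i i', J ≠ J' → #(L J i ∩ L J' i') ≤ 1) (k : α) :
    (Set.univ : Set ι).PairwiseDisjoint fun J => (L J (s k J)).erase k := by
  intro J _ J' _ hne
  refine disjoint_left.2 fun m hm hm' => hne ?_
  rw [mem_erase, hmem] at hm hm'
  exact eq_of_apply_eq_of_apply_eq hmem hmus hm.1 hm.2 hm'.2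

end Striation

section CompleteStriation

variable {d : ℕ} {κ : Type*} {L : Fin (d + 1) → κ → Finset (Fin (d ^ 2))}
  {s : Fin (d ^ 2) → Fin (d + 1) → κ}

theorem exists_apply_eq_of_ne (hmem : ∀ k J i, k ∈ L J i ↔ s k J = i)
    (hcard : ∀ J i, #(L J i) = d) (hmus : ∀ J J' i i', J ≠ J' → #(L J i ∩ L J' i') ≤ 1)
    {k k' : Fin (d ^ 2)} (hk : k ≠ k') : ∃ J, s k J = s k' J := by
  have hcover : univ.biUnion (fun J => (L J (s k J)).erase k) = univ.erase k := by
    refine eq_of_subset_of_card_le (fun m hm => ?_) ?_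
    · obtain ⟨J, -, hmJ⟩ := mem_biUnion.1 hm
      exact mem_erase.2 ⟨ne_of_mem_erase hmJ, mem_univ m⟩
    · rw [card_biUnion (by simpa using pairwiseDisjoint_blocks_erase hmem hmus k)]
      simp [card_erase_of_mem, hcard, hmem, ← sq_tsub_sq d 1]
  obtain ⟨J, -, hJ⟩ := mem_biUnion.1 (hcover ▸ mem_erase.2 ⟨hk.symm, mem_univ k'⟩)
  exact ⟨J, ((hmem _ _ _).1 (mem_of_mem_erase hJ)).symm⟩

theorem card_filter_apply_eq_apply [DecidableEq κ] (hmem : ∀ k J i, k ∈ L J i ↔ s k J = i)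
    (hcard : ∀ J i, #(L J i) = d) (hmus : ∀ J J' i i', J ≠ J' → #(L J i ∩ L J' i') ≤ 1)
    (k k' : Fin (d ^ 2)) : #{J | s k J = s k' J} = if k = k' then d + 1 else 1 := by
  split_ifs with hk
  · simp [hk]
  · obtain ⟨J, hJ⟩ := exists_apply_eq_of_ne hmem hcard hmus hk
    refine le_antisymm (card_le_one.2 fun J₁ h₁ J₂ h₂ => ?_) (card_pos.2 ⟨J, by simpa using hJ⟩)
    simp only [mem_filter, mem_univ, true_and] at h₁ h₂
    exact eq_of_apply_eq_of_apply_eq hmem hmus hk h₁ h₂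

end CompleteStriation

section CompleteMUB

variable {𝕜 : Type*} [RCLike 𝕜] {d : ℕ} {e : Fin (d + 1) → Fin d → EuclideanSpace 𝕜 (Fin d)}

theorem trace_sum_ketBra (he : ∀ J, Orthonormal 𝕜 (e J)) (t : Fin (d + 1) → Fin d) :
    (∑ J, ketBra (e J (t J))).trace = d + 1 := by
  simp [trace_sum, trace_ketBra, (he _).1]

theorem trace_sum_ketBra_mul_sum_ketBra (hd : d ≠ 0) (he : ∀ J, Orthonormal 𝕜 (e J))
    (hmub : ∀ J J' i i', J ≠ J' → ‖⟪e J i, e J' i'⟫_𝕜‖ ^ 2 = 1 / d) (t t' : Fin (d + 1) → Fin d) :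
    ((∑ J, ketBra (e J (t J))) * ∑ J, ketBra (e J (t' J))).trace = #{J | t J = t' J} + (d + 1) := by
  have hrow : ∀ J, ∑ J', (ketBra (e J (t J)) * ketBra (e J' (t' J'))).trace =
      (if t J = t' J then 1 else 0) + 1 := by
    intro J
    have hsame : (ketBra (e J (t J)) * ketBra (e J (t' J))).trace = if t J = t' J then 1 else 0 := by
      rw [trace_ketBra_mul_ketBra, orthonormal_iff_ite.1 (he J)]
      split_ifs <;> simp
    have hother : ∀ J' ∈ univ.erase J, (ketBra (e J (t J)) * ketBra (e J' (t' J'))).trace = 1 / d := by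
      intro J' hJ'
      rw [trace_ketBra_mul_ketBra, ← RCLike.ofReal_pow, hmub J J' _ _ (ne_of_mem_erase hJ').symm]
      simp
    rw [← add_sum_erase _ _ (mem_univ J), hsame, sum_congr rfl hother]
    simp [card_erase_of_mem, hd]
  simp_rw [sum_mul_sum, trace_sum, hrow, sum_add_distrib, sum_boole]
  simp

theorem sum_sum_ketBra_eq_smul_one (he : ∀ J, Orthonormal 𝕜 (e J)) {α : Type*} [Fintype α]
    {s : α → Fin (d + 1) → Fin d} (hs : ∀ J i, #{k | s k J = i} = d) :
    ∑ k, ∑ J, ketBra (e J (s k J)) = ((d + 1) * d : 𝕜) • 1 := by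
  rw [sum_comm]
  simp [sum_ketBra_comp_eq_smul_one (he _) (hs _), ← Nat.cast_smul_eq_nsmul 𝕜, smul_smul]

end CompleteMUB

/-- Construction 3: From a complete set of `d+1` mutually
unbiased bases `(e J i)` of `ℂ^d` and a complete set of `d+1` mutually
unbiased striations `(L J i)` of `{1,…,d²}`, the matrices
`A k := (1/d)(∑_J |e J (s k J)⟩⟨e J (s k J)| - I)` form a COB on `ℂ^d`. -/
theorem mub_mus_construction_is_cob (d : ℕ) (hd : 2 ≤ d)
    (e : Fin (d + 1) → Fin d → EuclideanSpace ℂ (Fin d))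
    (horthb : ∀ J, Orthonormal ℂ (e J))
    (hmub : ∀ J J' i i', J ≠ J' → ‖⟪e J i, e J' i'⟫_ℂ‖ ^ 2 = 1 / d)
    (L : Fin (d + 1) → Fin d → Finset (Fin (d ^ 2)))
    (hpart : ∀ J k, ∃! i, k ∈ L J i)
    (hcard : ∀ J i, (L J i).card = d)
    (hmus : ∀ J J' i i', J ≠ J' → (L J i ∩ L J' i').card = 1)
    (s : Fin (d ^ 2) → Fin (d + 1) → Fin d)
    (hs : ∀ k J, k ∈ L J (s k J))
    (A : Fin (d ^ 2) → Matrix (Fin d) (Fin d) ℂ)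
    (hA : ∀ k, A k = (1 / (d : ℂ)) •
      ((∑ J, Matrix.vecMulVec (e J (s k J))
          (fun a => (starRingEnd ℂ) (e J (s k J) a))) -
        (1 : Matrix (Fin d) (Fin d) ℂ))) :
    (∀ k, (A k).IsHermitian) ∧
    (∀ k k', (A k * A k').trace = if k = k' then (1 / (d : ℂ)) else 0) ∧
    (∑ k, A k = 1) := by
  have hd₀ : (d : ℂ) ≠ 0 := by exact_mod_cast (by omega : d ≠ 0)
  have hmem : ∀ k J i, k ∈ L J i ↔ s k J = i := fun k J i =>
    ⟨fun hk => (hpart J k).unique (hs k J) hk, fun h => h ▸ hs k J⟩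
  have hmus' : ∀ J J' i i', J ≠ J' → #(L J i ∩ L J' i') ≤ 1 := fun J J' i i' h =>
    (hmus J J' i i' h).le
  have hA' : ∀ k, A k = (1 / (d : ℂ)) • (∑ J, ketBra (e J (s k J)) - 1) := hA
  refine ⟨fun k => ?_, fun k k' => ?_, ?_⟩
  · have hsum : (∑ J, ketBra (e J (s k J))).IsHermitian :=
      isSelfAdjoint_sum univ fun J _ => isHermitian_ketBra (e J (s k J))
    rw [hA']
    exact (hsum.sub isHermitian_one).smul (by simp [IsSelfAdjoint])
  · rw [hA', hA', trace_smul_sub_one_mul_smul_sub_one,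
      trace_sum_ketBra_mul_sum_ketBra (by omega) horthb hmub, trace_sum_ketBra horthb,
      trace_sum_ketBra horthb, card_filter_apply_eq_apply hmem hcard hmus', Fintype.card_fin]
    split_ifs <;> push_cast <;> field_simp <;> ring
  · have hfiber : ∀ J i, #{k | s k J = i} = d := fun J i => by
      simp only [← hmem, filter_mem_eq_inter, univ_inter, hcard]
    rw [sum_congr rfl fun k _ => hA' k, ← smul_sum, sum_sub_distrib,
      sum_sum_ketBra_eq_smul_one horthb hfiber, sum_const, card_univ, Fintype.card_fin,
      ← Nat.cast_smul_eq_nsmul ℂ, ← sub_smul, smul_smul]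
    convert one_smul ℂ (1 : Matrix (Fin d) (Fin d) ℂ)
    push_cast
    field_simp
    ring
end

section
/- Let d ≥ 2, let G be a finite group with identity e and |G| = d², and let (U_g)_{g∈G} be a family of unitary d×d complex matrices forming a projective representation of G, i.e., for all g, g' ∈ G there exists c(g,g') ∈ ℂ with |c(g,g')| = 1 and U_g·U_{g'} = c(g,g')·U_{gg'}, and satisfying the orthogonality relation tr(U_g†·U_{g'}) = d·δ_{gg'}. Let A be a Hermitian d×d complex matrix with tr(A) = 1/d, tr(A²) = 1/d, and tr(A·U_g†·A·U_g) = 0 for every g ≠ e. Then the family (A_g)_{g∈G} with A_g := U_g·A·U_g† is a COB on ℂ^d: each A_g is Hermitian, tr(A_g·A_h) = (1/d)·δ_{gh} for all g, h ∈ G, and ∑_{g∈G} A_g = I. -/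
/-!
Conjugation by unitaries turns `tr(A_g A_h)` into `tr(A V† A V)` with `V = U_h† U_g`, and for a
projective representation `V` is a phase times `U_{h⁻¹g}`; the phase cancels, so orthogonality of
the `A_g` is exactly the fiducial condition on `A`. The sum `S = ∑ A_g` is then Hermitian with
`tr S = tr S² = d`, hence `tr((S - 1)†(S - 1)) = 0` and `S = 1`.
-/

open Matrix
open scoped ComplexOrder

section Trace

variable {n R : Type*} [Fintype n] [CommRing R] [StarRing R]

theorem Matrix.trace_conj_mul_conj (A B U V : Matrix n n R) :
    ((U * A * Uᴴ) * (V * B * Vᴴ)).trace = (A * (Vᴴ * U)ᴴ * B * (Vᴴ * U)).trace := by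
  rw [conjTranspose_mul, conjTranspose_conjTranspose]
  simp only [Matrix.mul_assoc]
  rw [trace_mul_comm U]
  simp only [Matrix.mul_assoc]

theorem Matrix.trace_mul_smul_conjTranspose_mul_smul {c : R} (hc : c * star c = 1)
    (A B V : Matrix n n R) : (A * (c • V)ᴴ * B * (c • V)).trace = (A * Vᴴ * B * V).trace := by
  simp only [conjTranspose_smul, Matrix.mul_smul, Matrix.smul_mul, smul_smul, hc, one_smul]

theorem Matrix.eq_one_of_trace_eq_card_of_trace_mul_self_eq_card [DecidableEq n]
    [PartialOrder R] [StarOrderedRing R] [NoZeroDivisors R] {S : Matrix n n R}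
    (hS : S.IsHermitian) (h₁ : S.trace = Fintype.card n) (h₂ : (S * S).trace = Fintype.card n) :
    S = 1 := by
  have : ((S - 1)ᴴ * (S - 1)).trace = 0 := by
    rw [conjTranspose_sub, hS.eq, conjTranspose_one, sub_mul, mul_sub, mul_sub, mul_one,
      one_mul, mul_one, trace_sub, trace_sub, trace_sub, trace_one, h₁, h₂]
    ring
  exact sub_eq_zero.mp (trace_conjTranspose_mul_self_eq_zero_iff.mp this)

end Trace

section Projective

variable {n G 𝕜 : Type*} [Fintype n] [DecidableEq n] [Group G] [RCLike 𝕜]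
  {U : G → Matrix n n 𝕜}

theorem Matrix.conjTranspose_mul_eq_smul_of_projective (hunitary : ∀ g, (U g)ᴴ * U g = 1)
    (hproj : ∀ g g', ∃ c : 𝕜, ‖c‖ = 1 ∧ U g * U g' = c • U (g * g')) (g h : G) :
    ∃ c : 𝕜, ‖c‖ = 1 ∧ (U h)ᴴ * U g = c • U (h⁻¹ * g) := by
  obtain ⟨c, hc, hU⟩ := hproj h (h⁻¹ * g)
  rw [mul_inv_cancel_left] at hU
  have hc₀ : c ≠ 0 := norm_ne_zero_iff.mp (by rw [hc]; exact one_ne_zero)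
  refine ⟨c⁻¹, by rw [norm_inv, hc, inv_one], ?_⟩
  have hUg : U g = c⁻¹ • (U h * U (h⁻¹ * g)) := by
    rw [hU, smul_smul, inv_mul_cancel₀ hc₀, one_smul]
  rw [hUg, Matrix.mul_smul, ← Matrix.mul_assoc, hunitary, Matrix.one_mul]

theorem Matrix.trace_conj_mul_conj_eq_ite_of_fiducial [DecidableEq G]
    (hunitary : ∀ g, (U g)ᴴ * U g = 1)
    (hproj : ∀ g g', ∃ c : 𝕜, ‖c‖ = 1 ∧ U g * U g' = c • U (g * g'))
    {A : Matrix n n 𝕜} (hfid : ∀ g : G, g ≠ 1 → (A * (U g)ᴴ * A * U g).trace = 0) (g h : G) :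
    ((U g * A * (U g)ᴴ) * (U h * A * (U h)ᴴ)).trace = if g = h then (A * A).trace else 0 := by
  rw [trace_conj_mul_conj]
  split_ifs with hgh
  · rw [hgh, hunitary, conjTranspose_one, Matrix.mul_one, Matrix.mul_one]
  · obtain ⟨c, hc, hV⟩ := conjTranspose_mul_eq_smul_of_projective hunitary hproj g h
    have hc' : c * star c = 1 := by rw [RCLike.star_def, RCLike.mul_conj, hc]; norm_num
    rw [hV, trace_mul_smul_conjTranspose_mul_smul hc']
    exact hfid _ (fun h1 => hgh (inv_mul_eq_one.mp h1).symm)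

end Projective

theorem fiducial_operator_construction_is_cob_general (d : ℕ)
    (G : Type*) [Group G] [Fintype G] [DecidableEq G]
    (hG : Fintype.card G = d ^ 2)
    (U : G → Matrix (Fin d) (Fin d) ℂ)
    (hunitary : ∀ g, U g * (U g)ᴴ = 1)
    (hproj : ∀ g g', ∃ c : ℂ, ‖c‖ = 1 ∧ U g * U g' = c • U (g * g'))
    (A : Matrix (Fin d) (Fin d) ℂ) (hA : A.IsHermitian)
    (htr : A.trace = (1 / (d : ℂ)))
    (htr2 : (A * A).trace = (1 / (d : ℂ)))
    (hfid : ∀ g : G, g ≠ 1 → (A * (U g)ᴴ * A * U g).trace = 0) :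
    (∀ g, (U g * A * (U g)ᴴ).IsHermitian) ∧
    (∀ g h : G, ((U g * A * (U g)ᴴ) * (U h * A * (U h)ᴴ)).trace =
      if g = h then (1 / (d : ℂ)) else 0) ∧
    (∑ g, U g * A * (U g)ᴴ = 1) := by
  have hU : ∀ g, (U g)ᴴ * U g = 1 := fun g => mul_eq_one_comm.mp (hunitary g)
  have horth := trace_conj_mul_conj_eq_ite_of_fiducial hU hproj hfid
  rw [htr2] at horth
  have hd : (d : ℂ) ≠ 0 := by
    have := hG ▸ Fintype.card_ne_zero (α := G)
    exact Nat.cast_ne_zero.mpr (by rintro rfl; simp at this)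
  have hsum : (Fintype.card G : ℂ) * (1 / d) = Fintype.card (Fin d) := by
    rw [hG, Fintype.card_fin]; push_cast; field_simp
  refine ⟨fun g => isHermitian_mul_mul_conjTranspose _ hA, horth, ?_⟩
  apply eq_one_of_trace_eq_card_of_trace_mul_self_eq_card
  · exact isSelfAdjoint_sum _ fun g _ => isHermitian_mul_mul_conjTranspose _ hA
  · simp only [trace_sum, trace_mul_cycle, hU, Matrix.one_mul, htr, Finset.sum_const,
      Finset.card_univ, nsmul_eq_mul, hsum]
  · simp only [Finset.sum_mul_sum, trace_sum, horth, Finset.sum_ite_eq, Finset.mem_univ,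
      if_true, Finset.sum_const, Finset.card_univ, nsmul_eq_mul, hsum]

/-- Fiducial-operator construction: Given a faithful-size
projective unitary representation `(U g)` of a group `G` of order `d²`
satisfying the orthogonality `tr(U_g† U_{g'}) = d δ_{g g'}`, and a Hermitian
fiducial operator `A` with `tr A = 1/d`, `tr A² = 1/d` and
`tr(A U_g† A U_g) = 0` for `g ≠ e`, the family `A_g := U_g A U_g†` is a COB
on `ℂ^d`. -/
theorem fiducial_operator_construction_is_cob (d : ℕ) (hd : 2 ≤ d)
    (G : Type*) [Group G] [Fintype G] [DecidableEq G]
    (hG : Fintype.card G = d ^ 2)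
    (U : G → Matrix (Fin d) (Fin d) ℂ)
    (hunitary : ∀ g, U g * (U g)ᴴ = 1)
    (hproj : ∀ g g', ∃ c : ℂ, ‖c‖ = 1 ∧ U g * U g' = c • U (g * g'))
    (horth : ∀ g g', ((U g)ᴴ * U g').trace = if g = g' then (d : ℂ) else 0)
    (A : Matrix (Fin d) (Fin d) ℂ) (hA : A.IsHermitian)
    (htr : A.trace = (1 / (d : ℂ)))
    (htr2 : (A * A).trace = (1 / (d : ℂ)))
    (hfid : ∀ g : G, g ≠ 1 → (A * (U g)ᴴ * A * U g).trace = 0) :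
    (∀ g, (U g * A * (U g)ᴴ).IsHermitian) ∧
    (∀ g h : G, ((U g * A * (U g)ᴴ) * (U h * A * (U h)ᴴ)).trace =
      if g = h then (1 / (d : ℂ)) else 0) ∧
    (∑ g, U g * A * (U g)ᴴ = 1) :=
  fiducial_operator_construction_is_cob_general d G hG U hunitary hproj A hA htr htr2 hfid
end
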